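/- arXiv:2507.11254 — 2 statements merged into one kernel-verified Lean document; each statement's English description precedes it below -/
import Mathlib

section
/- For each m ≥ 3, let S and S' be the caterpillars S = (x₁, x₂, …, x_m, y₁, y₂, …, y_m) and S' = (y₁, y₂, …, y_m, x₁, x₂, …, x_m) on 2m leaves. Then under the ordering σ with σ(x₁) < ⋯ < σ(x_m) < σ(y₁) < ⋯ < σ(y_m), the OLA distance satisfies d^σ_OLA(S,S') = 2, while the hybrid number h(S,S') = m. In particular d*_OLA(S,S') ≤ 2 < m = h(S,S'), so the inequality d*_OLA ≤ h can be strict with arbitrarily large gap. -/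
namespace Phylo

/-- A rooted binary tree with leaves labelled by `W`.  A rooted binary
phylogenetic tree (whose root has out-degree one) is represented by the
subtree hanging below the root's unique child; the root edge is implicit. -/
inductive PTree (W : Type) where
  | leaf (x : W)
  | node (l r : PTree W)
  deriving DecidableEq

namespace PTree

variable {W V : Type}

def leaves : PTree W → List W
  | leaf x => [x]
  | node l r => l.leaves ++ r.leaves

def map (f : W → V) : PTree W → PTree V
  | leaf x => leaf (f x)
  | node l r => node (l.map f) (r.map f)

/-- A tree is a phylogenetic tree when its leaves are bijectively labelled,
i.e. no label occurs twice. -/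
def IsPhylo (t : PTree W) : Prop := t.leaves.Nodup

def labelSet [DecidableEq W] (t : PTree W) : Finset W := t.leaves.toFinset

end PTree

open PTree

/-- An ordering on the label set of `t`: a bijection from the leaf labels
onto `{1, …, n}`. -/
def IsOrd [DecidableEq W] (t : PTree W) (σ : W → ℕ) : Prop :=
  Set.BijOn σ ↑t.labelSet (Set.Icc 1 t.leaves.length)

/-! ### Basic operations on trees with natural-number (rank) labels -/

def minLeaf : PTree ℕ → ℕ
  | .leaf x => x
  | .node l r => min (minLeaf l) (minLeaf r)

/-- Restriction of a tree to the leaves satisfying `p` (suppressing vertices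
of out-degree one); `none` if no leaf survives. -/
def restrict {W : Type} (p : W → Bool) : PTree W → Option (PTree W)
  | .leaf x => if p x then some (.leaf x) else none
  | .node l r =>
    match restrict p l, restrict p r with
    | some a, some b => some (.node a b)
    | some a, none => some a
    | none, some b => some b
    | none, none => none

/-- The sibling subtree of the leaf labelled `i` (the other child of its
parent), if the leaf occurs. -/
def sibling {W : Type} [DecidableEq W] (i : W) : PTree W → Option (PTree W)
  | .leaf _ => none
  | .node l r =>
    if l = .leaf i then some r
    else if r = .leaf i then some l
    else match sibling i l with
      | some s => some s
      | none => sibling i r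

/-- Hamming distance between two (equal-length) vectors. -/
def hamming {α : Type} [DecidableEq α] (u v : List α) : ℕ :=
  (u.zip v).countP fun p => decide (p.1 ≠ p.2)

/-! ### OLA -/

/-- The OLA label of a vertex, given as the root of its subtree (inside a tree
whose leaves are labelled by ranks):  a leaf is labelled by its rank, and the
internal vertex created when the `j`-th leaf was attached is labelled `-j`;
this creation step equals the larger of the two minimal leaf ranks below. -/
def olaLabel : PTree ℕ → ℤ
  | .leaf x => (x : ℤ)
  | .node l r => -(max (minLeaf l) (minLeaf r) : ℤ)

/-- The `i`-th coordinate (for `i ≥ 3`) of the OLA vector:  the OLA label of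
the sibling of the rank-`i` leaf in the restriction of `t` to ranks `≤ i`. -/
def olaCoord (t : PTree ℕ) (i : ℕ) : ℤ :=
  match restrict (fun x => decide (x ≤ i)) t with
  | some ti =>
    match sibling i ti with
    | some s => olaLabel s
    | none => 0
  | none => 0

/-- The OLA vector of a tree whose leaves are labelled by ranks `1, …, n`. -/
def olaVec (t : PTree ℕ) : List ℤ :=
  (List.range t.leaves.length).map fun j =>
    if j = 0 then 0 else if j = 1 then 1 else olaCoord t (j + 1)

/-- The OLA distance of `t, t'` with respect to the ordering `σ`. -/
def dOLA {W : Type} (σ : W → ℕ) (t t' : PTree W) : ℕ :=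
  hamming (olaVec (t.map σ)) (olaVec (t'.map σ))

/-- The OLA measure: minimum OLA distance over all orderings. -/
noncomputable def dOLAstar {W : Type} [DecidableEq W] (t t' : PTree W) : ℕ :=
  sInf {k | ∃ σ : W → ℕ, IsOrd t σ ∧ dOLA σ t t' = k}

end Phylo
/-! ### HOP -/

namespace Phylo
open PTree

/-- The HOP labels of the internal vertices on the path from the root of `t`
down to the leaf of rank `i` (the internal HOP label of a vertex with children
`l, r` is `max (minLeaf l) (minLeaf r)`). -/
def pathLabels (i : ℕ) : PTree ℕ → List ℕ
  | .leaf _ => []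
  | .node l r =>
    if i ∈ l.leaves then max (minLeaf l) (minLeaf r) :: pathLabels i l
    else if i ∈ r.leaves then max (minLeaf l) (minLeaf r) :: pathLabels i r
    else []

/-- The `i`-th path segment `v(P_i)` of the HOP vector of `t`:  the internal
labels strictly between the internal vertex labelled `i` and the leaf of rank
`i` (for `i = 1` the vertex labelled `1` is the root `ρ`). -/
def hopSeg (t : PTree ℕ) (i : ℕ) : List ℕ :=
  if i = 1 then 1 :: pathLabels 1 t
  else ((pathLabels i t).dropWhile fun a => decide (a ≠ i)).drop 1

/-- Length of a longest common subsequence of two lists. -/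
def lcsLen : List ℕ → List ℕ → ℕ
  | [], _ => 0
  | _ :: _, [] => 0
  | a :: u, b :: v =>
    if a = b then lcsLen u v + 1
    else max (lcsLen (a :: u) v) (lcsLen u (b :: v))
  termination_by u v => u.length + v.length
  decreasing_by all_goals (simp only [List.length_cons]; omega)

/-- The HOP similarity of `t, t'` with respect to `σ`. -/
def simHOP {W : Type} (σ : W → ℕ) (t t' : PTree W) : ℕ :=
  ∑ i ∈ Finset.range (t.leaves.length - 1),
    lcsLen (hopSeg (t.map σ) (i + 1)) (hopSeg (t'.map σ) (i + 1))

/-- The HOP distance of `t, t'` with respect to `σ`. -/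
def dHOP {W : Type} (σ : W → ℕ) (t t' : PTree W) : ℕ :=
  t.leaves.length - simHOP σ t t'

/-- The HOP measure: minimum HOP distance over all orderings. -/
noncomputable def dHOPstar {W : Type} [DecidableEq W] (t t' : PTree W) : ℕ :=
  sInf {k | ∃ σ : W → ℕ, IsOrd t σ ∧ dHOP σ t t' = k}

end Phylo
/-! ### Phylo2Vec (P2V) -/

namespace Phylo
open PTree

/-- Binary trees with rank-labelled leaves and optionally labelled internal
vertices, used to run the P2V labelling algorithm. -/
inductive LTree where
  | leaf (r : ℕ)
  | node (lbl : Option ℕ) (l r : LTree)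
  deriving DecidableEq

namespace LTree

def ofPTree : PTree ℕ → LTree
  | .leaf x => .leaf x
  | .node l r => .node none (ofPTree l) (ofPTree r)

/-- The label of the root of an `LTree` (a leaf is labelled by its rank). -/
def lbl? : LTree → Option ℕ
  | .leaf r => some r
  | .node lbl _ _ => lbl

/-- The candidate vertices for the next P2V label: unlabelled internal
vertices both of whose children are labelled, together with the larger child
label; a vertex is recorded by its position (a list of booleans). -/
def cands : LTree → List (List Bool × ℕ)
  | .leaf _ => []
  | .node lbl l r =>
    (match lbl, l.lbl?, r.lbl? with
      | none, some a, some b => [(([] : List Bool), max a b)]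
      | _, _, _ => []) ++
    (cands l).map (fun p => (false :: p.1, p.2)) ++
    (cands r).map (fun p => (true :: p.1, p.2))

/-- Set the label of the vertex at position `p` to `j`. -/
def setLbl (j : ℕ) : LTree → List Bool → LTree
  | .leaf r, _ => .leaf r
  | .node _ l r, [] => .node (some j) l r
  | .node lbl l r, false :: p => .node lbl (setLbl j l p) r
  | .node lbl l r, true :: p => .node lbl l (setLbl j r p)

/-- One step of the P2V labelling: give label `j` to the candidate vertex
whose larger child label is maximal. -/
def step (j : ℕ) (t : LTree) : LTree :=
  match List.argmax Prod.snd t.cands with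
  | some c => setLbl j t c.1
  | none => t

/-- Run `k` steps of the P2V labelling, starting with label `j`. -/
def run : ℕ → ℕ → LTree → LTree
  | 0, _, t => t
  | k + 1, j, t => run k (j + 1) (step j t)

def siblingL (i : ℕ) : LTree → Option LTree
  | .leaf _ => none
  | .node _ l r =>
    if l = .leaf i then some r
    else if r = .leaf i then some l
    else match siblingL i l with
      | some s => some s
      | none => siblingL i r

def subAtL : LTree → List Bool → Option LTree
  | t, [] => some t
  | .leaf _, _ :: _ => none
  | .node _ l _, false :: p => subAtL l p
  | .node _ _ r, true :: p => subAtL r p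

end LTree

/-- The `i`-th step P2V labelling of the restriction `T_i` of `t` to ranks
`≤ i`:  the internal vertices are labelled `i+1, …, 2i-1`. -/
def p2vLabeled (t : PTree ℕ) (i : ℕ) : Option LTree :=
  (restrict (fun x => decide (x ≤ i)) t).map fun ti =>
    LTree.run (i - 1) (i + 1) (LTree.ofPTree ti)

/-- The `i`-th coordinate (for `i ≥ 3`) of the P2V vector: the `i`-th step
P2V label of the sibling of the rank-`i` leaf in `T_i`. -/
def p2vCoord (t : PTree ℕ) (i : ℕ) : ℤ :=
  match p2vLabeled t i with
  | some lt =>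
    match LTree.siblingL i lt with
    | some s => ((LTree.lbl? s).getD 0 : ℤ)
    | none => 0
  | none => 0

/-- The P2V vector of a tree whose leaves are labelled by ranks `1, …, n`. -/
def p2vVec (t : PTree ℕ) : List ℤ :=
  (List.range t.leaves.length).map fun j =>
    if j = 0 then 0 else if j = 1 then 1 else p2vCoord t (j + 1)

/-- The P2V distance of `t, t'` with respect to `σ`. -/
def dP2V {W : Type} (σ : W → ℕ) (t t' : PTree W) : ℕ :=
  hamming (p2vVec (t.map σ)) (p2vVec (t'.map σ))

/-- The P2V measure: minimum P2V distance over all orderings. -/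
noncomputable def dP2Vstar {W : Type} [DecidableEq W] (t t' : PTree W) : ℕ :=
  sInf {k | ∃ σ : W → ℕ, IsOrd t σ ∧ dP2V σ t t' = k}

end Phylo
/-! ### Isomorphism, positions, and the rSPR distance -/

namespace Phylo
open PTree

/-- Isomorphism of rooted (leaf-labelled) binary trees: the shapes agree up
to swapping children, and corresponding leaves carry the same label. -/
inductive Iso {W : Type} : PTree W → PTree W → Prop
  | leaf (x : W) : Iso (.leaf x) (.leaf x)
  | node {a b c d : PTree W} : Iso a c → Iso b d → Iso (.node a b) (.node c d)
  | swap {a b c d : PTree W} : Iso a d → Iso b c → Iso (.node a b) (.node c d)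

/-- The subtree of `t` at position `p` (a list of booleans: `false` = left
child, `true` = right child). -/
def subAt {W : Type} : PTree W → List Bool → Option (PTree W)
  | t, [] => some t
  | .leaf _, _ :: _ => none
  | .node l _, false :: p => subAt l p
  | .node _ r, true :: p => subAt r p

/-- Replace the subtree of `t` at position `p` by `s`. -/
def replaceAt {W : Type} : PTree W → List Bool → PTree W → PTree W
  | _, [], s => s
  | .leaf x, _ :: _, _ => .leaf x
  | .node l r, false :: p, s => .node (replaceAt l p s) r
  | .node l r, true :: p, s => .node l (replaceAt r p s)

/-- The position of the leaf labelled `x` in `t`, if it occurs. -/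
def leafPos {W : Type} [DecidableEq W] (x : W) : PTree W → Option (List Bool)
  | .leaf y => if y = x then some [] else none
  | .node l r =>
    match leafPos x l with
    | some p => some (false :: p)
    | none => (leafPos x r).map (true :: ·)

/-- The position of the leaf labelled `x` (defaulting to the root). -/
def pos {W : Type} [DecidableEq W] (t : PTree W) (x : W) : List Bool :=
  (leafPos x t).getD []

/-- One-hole contexts: plugging a tree into a context reconstructs a tree.
Each frame records a sibling subtree and on which side it sits. -/
def plug {W : Type} : List (Bool × PTree W) → PTree W → PTree W
  | [], t => t
  | (false, s) :: c, t => .node (plug c t) s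
  | (true, s) :: c, t => .node s (plug c t)

/-- A single rooted subtree prune and regraft (rSPR) move: prune the subtree
`s` (whose parent is an internal vertex of `t`), suppress its parent, and
regraft `s` by subdividing an edge (possibly the root edge) of the remaining
tree. -/
def RSPRMove {W : Type} (t t' : PTree W) : Prop :=
  ∃ (c₁ : List (Bool × PTree W)) (s r : PTree W),
    (t = plug c₁ (.node s r) ∨ t = plug c₁ (.node r s)) ∧
    ∃ (c₂ : List (Bool × PTree W)) (b : PTree W),
      plug c₁ r = plug c₂ b ∧
      (t' = plug c₂ (.node s b) ∨ t' = plug c₂ (.node b s))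

/-- `Reach k t t'`: `t` can be transformed into (a tree isomorphic to) `t'`
by `k` rSPR moves. -/
inductive Reach {W : Type} : ℕ → PTree W → PTree W → Prop
  | refl {t t' : PTree W} : Iso t t' → Reach 0 t t'
  | step {k : ℕ} {t u t' : PTree W} :
      RSPRMove t u → Reach k u t' → Reach (k + 1) t t'

/-- The rSPR distance. -/
noncomputable def dRSPR {W : Type} (t t' : PTree W) : ℕ :=
  sInf {k | Reach k t t'}

end Phylo
/-! ### Agreement forests and the hybrid number -/

namespace Phylo
open PTree

/-- Longest common prefix of two positions. -/
def lcp : List Bool → List Bool → List Bool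
  | a :: u, b :: v => if a = b then a :: lcp u v else []
  | _, _ => []

variable {W : Type} [DecidableEq W]

/-- Restriction of `t` to the labels in the finite set `L`. -/
def restrictF (t : PTree W) (L : Finset W) : Option (PTree W) :=
  restrict (fun x => decide (x ∈ L)) t

/-- The vertex set (as a set of positions) of the minimal subtree `T(L)` of
`t` connecting the leaves with labels in `L`. -/
def compVerts (t : PTree W) (L : Finset W) : Set (List Bool) :=
  {p | ∃ a ∈ L, ∃ b ∈ L,
    lcp (pos t a) (pos t b) <+: p ∧ (p <+: pos t a ∨ p <+: pos t b)}

/-- The vertex set of the minimal subtree of `t` connecting the leaves with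
labels in `L` together with the root `ρ`. -/
def rhoVerts (t : PTree W) (L : Finset W) : Set (List Bool) :=
  {p | ∃ a ∈ L, p <+: pos t a}

/-- The position of the root of the minimal connecting subtree `T(L)`. -/
noncomputable def rootOf (t : PTree W) (L : Finset W) : List Bool :=
  match L.toList with
  | [] => []
  | a :: rest => rest.foldr (fun b acc => lcp (pos t b) acc) (pos t a)

/-- `Lρ` (the label set of the component containing the root `ρ`, possibly
empty) together with the nonempty label sets in `C` form an agreement forest
for `t` and `t'`. -/
def IsAgreementForest (t t' : PTree W) (Lρ : Finset W) (C : Finset (Finset W)) : Prop :=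
  -- the label sets partition the common label set
  (∀ L ∈ C, L.Nonempty) ∧
  (∀ L ∈ C, ∀ L' ∈ C, L ≠ L' → Disjoint L L') ∧
  (∀ L ∈ C, Disjoint Lρ L) ∧
  (∀ x ∈ t.labelSet, x ∈ Lρ ∨ ∃ L ∈ C, x ∈ L) ∧
  (↑Lρ ⊆ (t.labelSet : Set W)) ∧ (∀ L ∈ C, ↑L ⊆ (t.labelSet : Set W)) ∧
  -- the restrictions of t and t' to each label set are isomorphic
  (∀ L ∈ insert Lρ C,
    ∀ u, restrictF t L = some u → ∃ u', restrictF t' L = some u' ∧ Iso u u') ∧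
  -- the minimal connecting subtrees are vertex-disjoint, in t and in t'
  (∀ L ∈ C, ∀ L' ∈ C, L ≠ L' →
    (∀ p ∈ compVerts t L, p ∉ compVerts t L') ∧
    (∀ p ∈ compVerts t' L, p ∉ compVerts t' L')) ∧
  (∀ L ∈ C,
    (∀ p ∈ rhoVerts t Lρ, p ∉ compVerts t L) ∧
    (∀ p ∈ rhoVerts t' Lρ, p ∉ compVerts t' L))

/-- The ancestor relation between components of an agreement forest: the root
of `T(L)` is a (proper) ancestor of the root of `T(L')` in `t` or in `t'`. -/
def afEdge (t t' : PTree W) (C : Finset (Finset W)) (L L' : Finset W) : Prop :=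
  L ∈ C ∧ L' ∈ C ∧ L ≠ L' ∧
  ((rootOf t L <+: rootOf t L' ∧ rootOf t L ≠ rootOf t L') ∨
   (rootOf t' L <+: rootOf t' L' ∧ rootOf t' L ≠ rootOf t' L'))

/-- An acyclic agreement forest. -/
def IsAcyclicAF (t t' : PTree W) (Lρ : Finset W) (C : Finset (Finset W)) : Prop :=
  IsAgreementForest t t' Lρ C ∧
  ∀ L, ¬ Relation.TransGen (afEdge t t' C) L L

/-- The hybrid number of `t` and `t'`: the minimum number of non-root
components of an acyclic agreement forest (Baroni–Semple–Steel). -/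
noncomputable def hyb (t t' : PTree W) : ℕ :=
  sInf {k | ∃ Lρ C, IsAcyclicAF t t' Lρ C ∧ C.card = k}

/-! ### Caterpillars and cherry-picking sequences -/

/-- The caterpillar `(z₁, z₂, z₃, …)`: `z₁, z₂` form a cherry and each later
leaf is attached above the previous ones. -/
def caterpillar (z₁ z₂ : W) (zs : List W) : PTree W :=
  zs.foldl (fun t z => .node t (.leaf z)) (.node (.leaf z₁) (.leaf z₂))

/-- The cherry partner of the leaf `x` in `t`, if `x` is in a cherry. -/
def cherryPartner (x : W) (t : PTree W) : Option W :=
  match sibling x t with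
  | some (.leaf y) => some y
  | _ => none

/-- The restriction of `t` obtained by deleting the first `i` elements of the
sequence `S`. -/
def restAfter (t : PTree W) (S : List W) (i : ℕ) : Option (PTree W) :=
  restrict (fun x => decide (x ∉ S.take i)) t

/-- `S` is a cherry-picking sequence for `t`: every element except the last
is in a cherry of the restriction of `t` to the not-yet-picked leaves. -/
def IsCPS (t : PTree W) (S : List W) : Prop :=
  ∀ i, i + 1 < S.length →
    ∃ u, restAfter t S i = some u ∧
      ∀ h : i < S.length, ∃ y, cherryPartner (S.get ⟨i, h⟩) u = some y

/-- `S` is a common cherry-picking sequence for `t` and `t'` (in particular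
it enumerates the common leaf set). -/
def IsCommonCPS (t t' : PTree W) (S : List W) : Prop :=
  S.Nodup ∧ (∀ x, x ∈ S ↔ x ∈ t.leaves) ∧ IsCPS t S ∧ IsCPS t' S

/-- The weight of a common cherry-picking sequence: the number of positions
(except the last) at which the cherry partners in the two restrictions
disagree. -/
def wtCPS (t t' : PTree W) (S : List W) : ℕ :=
  (List.range (S.length - 1)).countP fun i =>
    match S[i]?, restAfter t S i, restAfter t' S i with
    | some x, some u, some u' => decide (cherryPartner x u ≠ cherryPartner x u')
    | _, _, _ => false

/-- The ordering on the leaf set induced by the sequence `S`: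
`σ (x_i) = n - i + 1` (with `i` one-based). -/
def inducedOrd (S : List W) (x : W) : ℕ :=
  S.length - S.idxOf x

end Phylo
/-! ### Phylogenetic networks, tree-child / temporal networks, display -/

namespace Phylo
open PTree

/-- A finite directed graph with a root and designated leaf vertices, used to
model rooted binary phylogenetic networks. -/
structure Network (W : Type) where
  V : Type
  [fin : Fintype V]
  [deq : DecidableEq V]
  edge : V → V → Bool
  root : V
  leafOf : W → V

attribute [instance] Network.fin Network.deq

namespace Network

variable {W : Type} [DecidableEq W]

def inDeg (N : Network W) (v : N.V) : ℕ :=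
  Fintype.card {u : N.V // N.edge u v = true}

def outDeg (N : Network W) (v : N.V) : ℕ :=
  Fintype.card {u : N.V // N.edge v u = true}

/-- The number of reticulations (in-degree-two vertices). -/
def retCount (N : Network W) : ℕ :=
  Fintype.card {v : N.V // N.inDeg v = 2}

/-- `N` is a rooted binary phylogenetic network with leaf set `A`. -/
def Wf (N : Network W) (A : Finset W) : Prop :=
  (∀ v : N.V, ¬ Relation.TransGen (fun a b : N.V => N.edge a b = true) v v) ∧
  N.inDeg N.root = 0 ∧ N.outDeg N.root = 1 ∧
  Set.InjOn N.leafOf ↑A ∧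
  (∀ x ∈ A, N.inDeg (N.leafOf x) = 1 ∧ N.outDeg (N.leafOf x) = 0) ∧
  (∀ v : N.V, N.outDeg v = 0 → ∃ x ∈ A, v = N.leafOf x) ∧
  (∀ v : N.V, v ≠ N.root → (∀ x ∈ A, v ≠ N.leafOf x) →
    (N.inDeg v = 1 ∧ N.outDeg v = 2) ∨ (N.inDeg v = 2 ∧ N.outDeg v = 1))

/-- Tree-child: every non-leaf vertex has a child of in-degree one. -/
def TreeChild (N : Network W) : Prop :=
  ∀ v : N.V, N.outDeg v ≠ 0 → ∃ u : N.V, N.edge v u = true ∧ N.inDeg u = 1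

/-- Temporal: there is a time map which is constant along reticulation edges
and strictly increasing along tree edges. -/
def Temporal (N : Network W) : Prop :=
  ∃ time : N.V → ℝ, (∀ v, 0 < time v) ∧
    ∀ u v : N.V, N.edge u v = true →
      (N.inDeg v = 2 → time u = time v) ∧ (N.inDeg v = 1 → time u < time v)

/-- A directed path in `N` from `u` to `v`, with at least one edge. -/
def GoodPath (N : Network W) (l : List N.V) (u v : N.V) : Prop :=
  2 ≤ l.length ∧ l.head? = some u ∧ l.getLast? = some v ∧
    l.Chain' (fun a b => N.edge a b = true)

/-- The interior of a path. -/
def inter {α : Type} (l : List α) : List α := (l.drop 1).dropLast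

/-- `N` displays the tree `t`: there is a subtree of `N` which is a
subdivision of `t` (including its root edge).  The vertices of `t` are given
by their positions; edge `e = none` is the root edge and `e = some (p, b)`
the edge from the vertex at `p` to its `b`-child. -/
def Displays (N : Network W) (t : PTree W) : Prop :=
  ∃ (φ : List Bool → N.V) (P : Option (List Bool × Bool) → List N.V),
    GoodPath N (P none) N.root (φ []) ∧
    (∀ p l r, subAt t p = some (.node l r) →
      GoodPath N (P (some (p, false))) (φ p) (φ (p ++ [false])) ∧
      GoodPath N (P (some (p, true))) (φ p) (φ (p ++ [true]))) ∧
    (∀ x : W, ∀ p, leafPos x t = some p → φ p = N.leafOf x) ∧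
    (∀ p q, (subAt t p).isSome → (subAt t q).isSome → φ p = φ q → p = q) ∧
    -- the paths realising distinct tree edges are internally disjoint
    (∀ e e' : Option (List Bool × Bool), e ≠ e' →
      (∀ pb, e = some pb → ∃ l r, subAt t pb.1 = some (.node l r)) →
      (∀ pb, e' = some pb → ∃ l r, subAt t pb.1 = some (.node l r)) →
      ∀ v ∈ inter (P e), v ∉ P e') ∧
    (∀ e : Option (List Bool × Bool),
      (∀ pb, e = some pb → ∃ l r, subAt t pb.1 = some (.node l r)) →
      ∀ v ∈ inter (P e), ∀ p, (subAt t p).isSome → v ≠ φ p)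

end Network

/-- The temporal tree-child hybrid number of `t` and `t'`. -/
noncomputable def hybTemporal (t t' : PTree W) [DecidableEq W] : ℕ :=
  sInf {k | ∃ N : Network W, N.Wf t.labelSet ∧ N.TreeChild ∧ N.Temporal ∧
    N.Displays t ∧ N.Displays t' ∧ N.retCount = k}

end Phylo
/-! ### Labelled decorations, pendant subtrees, and the reductions -/

namespace Phylo
open PTree

/-- Binary trees in which every vertex carries a label in `α`. -/
inductive DTree (α : Type) where
  | leaf (lbl : α)
  | node (lbl : α) (l r : DTree α)

/-- Label-preserving isomorphism of decorated trees. -/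
inductive DIso {α : Type} : DTree α → DTree α → Prop
  | leaf (x : α) : DIso (.leaf x) (.leaf x)
  | node {k : α} {a b c d : DTree α} :
      DIso a c → DIso b d → DIso (.node k a b) (.node k c d)
  | swap {k : α} {a b c d : DTree α} :
      DIso a d → DIso b c → DIso (.node k a b) (.node k c d)

/-- The HOP labelling of a (rank-labelled) tree: leaves are labelled by their
rank and an internal vertex by the larger of the minimal ranks below its two
children. -/
def hopDec : PTree ℕ → DTree ℕ
  | .leaf x => .leaf x
  | .node l r => .node (max (minLeaf l) (minLeaf r)) (hopDec l) (hopDec r)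

/-- The OLA labelling of a (rank-labelled) tree: leaves are labelled by their
rank and an internal vertex by `-j` where `j` is the step at which it was
created (the larger of the minimal ranks below its two children). -/
def olaDec : PTree ℕ → DTree ℤ
  | .leaf x => .leaf (x : ℤ)
  | .node l r => .node (-(max (minLeaf l) (minLeaf r) : ℤ)) (olaDec l) (olaDec r)

/-- The P2V labelling of the subtree at position `p` of a rank-labelled tree
`t` with `n` leaves (labels read off after the full run of the algorithm). -/
noncomputable def p2vDecAt (t : PTree ℕ) (p : List Bool) : Option (DTree ℕ) :=
  (Option.bind (p2vLabeled t t.leaves.length) (fun lt => LTree.subAtL lt p)).map toD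
where
  toD : LTree → DTree ℕ
    | .leaf r => .leaf r
    | .node lbl l r => .node (lbl.getD 0) (toD l) (toD r)

/-- The restriction of a vector to the coordinates whose (one-based) indices
lie in `R` (the coordinates associated with a set of ranks). -/
def restrictVec (v : List ℤ) (R : Finset ℕ) : List ℤ :=
  (List.range v.length).filterMap fun j =>
    if j + 1 ∈ R then v[j]? else none

variable {W : Type} [DecidableEq W]

/-- `Y` is the label set of a pendant subtree of `t`. -/
def IsPendantSet (t : PTree W) (Y : Finset W) : Prop :=
  ∃ p s, subAt t p = some s ∧ s.labelSet = Y

/-- `Y` carries a common pendant subtree of `t` and `t'`. -/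
def IsCommonPendant (t t' : PTree W) (Y : Finset W) : Prop :=
  IsPendantSet t Y ∧ IsPendantSet t' Y ∧
  ∀ u u', restrictF t Y = some u → restrictF t' Y = some u' → Iso u u'

/-- The position of the parent of the leaf labelled `x`. -/
def parentPos (t : PTree W) (x : W) : List Bool := (pos t x).dropLast

/-- `xs` is a chain of `t`. -/
def IsChain (t : PTree W) (xs : List W) : Prop :=
  3 ≤ xs.length ∧ (∀ x ∈ xs, x ∈ t.leaves) ∧ xs.Nodup ∧
  (∀ (h1 : 0 < xs.length) (h2 : 1 < xs.length),
    parentPos t (xs.get ⟨0, h1⟩) = parentPos t (xs.get ⟨1, h2⟩) ∨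
    parentPos t (xs.get ⟨1, h2⟩) = (parentPos t (xs.get ⟨0, h1⟩)).dropLast) ∧
  (∀ i (h : i + 2 < xs.length),
    parentPos t (xs.get ⟨i + 2, h⟩)
      = (parentPos t (xs.get ⟨i + 1, by omega⟩)).dropLast)

/-- A single application of the subtree reduction, replacing (in both trees)
a maximal common pendant subtree with label set `Y` (with at least two
leaves) by a single new leaf `pnew`. -/
def SubtreeReduction (t t' u u' : PTree W) (Y : Finset W) (pnew : W) : Prop :=
  IsCommonPendant t t' Y ∧ 2 ≤ Y.card ∧
  (∀ Z, IsCommonPendant t t' Z → Y ⊆ Z → Z = Y) ∧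
  pnew ∉ t.leaves ∧ pnew ∉ t'.leaves ∧
  (∃ p s, subAt t p = some s ∧ s.labelSet = Y ∧ u = replaceAt t p (.leaf pnew)) ∧
  (∃ q s', subAt t' q = some s' ∧ s'.labelSet = Y ∧ u' = replaceAt t' q (.leaf pnew))

/-- A single application of the chain reduction, replacing (in both trees) a
maximal common chain `xs` of length at least four by a common chain of length
three on the new labels `c₁, c₂, c₃`. -/
def ChainReduction (t t' u u' : PTree W) (xs : List W) (c₁ c₂ c₃ : W) : Prop :=
  4 ≤ xs.length ∧ IsChain t xs ∧ IsChain t' xs ∧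
  (∀ ys, IsChain t ys → IsChain t' ys → xs <:+: ys → ys = xs) ∧
  c₁ ∉ t.leaves ∧ c₂ ∉ t.leaves ∧ c₃ ∉ t.leaves ∧
  c₁ ≠ c₂ ∧ c₁ ≠ c₃ ∧ c₂ ≠ c₃ ∧
  (∃ u₀ u₀',
    restrict (fun x => decide (x ∉ xs.drop 3)) t = some u₀ ∧
    restrict (fun x => decide (x ∉ xs.drop 3)) t' = some u₀' ∧
    u = u₀.map (chainRen xs c₁ c₂ c₃) ∧ u' = u₀'.map (chainRen xs c₁ c₂ c₃))
where
  chainRen (xs : List W) (c₁ c₂ c₃ : W) (x : W) : W :=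
    if xs[0]? = some x then c₁ else if xs[1]? = some x then c₂
    else if xs[2]? = some x then c₃ else x

/-- The elements of `Y` occupy consecutive ranks under `σ`. -/
def ConsecRanks (σ : W → ℕ) (Y : Finset W) : Prop :=
  ∃ i, Y.image σ = Finset.Ico i (i + Y.card)

end Phylo
/-! ### Polynomial time, NP, and NP-hardness -/

namespace Phylo

/-- Decision problems over binary strings. -/
def Lang : Type := List Bool → Prop

/-- A trivial finite encoding of binary strings. -/
def boolsEnc : Computability.Encoding (List Bool) Bool :=
  ⟨id, some, fun _ => rfl⟩

/-- `f` is computable in polynomial time (by a Turing machine, in the sense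
of Mathlib's `Turing.TM2ComputableInPolyTime`). -/
def PolyTimeComputable (f : List Bool → List Bool) : Prop :=
  Nonempty (Turing.TM2ComputableInPolyTime boolsEnc.encode boolsEnc.encode f)

/-- Polynomial-time many-one reducibility. -/
def Reduces (A B : Lang) : Prop :=
  ∃ f : List Bool → List Bool, PolyTimeComputable f ∧ ∀ x, A x ↔ B (f x)

/-- Pairing of an input with a certificate. -/
def pairEnc (x c : List Bool) : List Bool :=
  (x.flatMap fun b => [true, b]) ++ false :: c

/-- `A` is in NP: membership is certified by certificates of polynomially
bounded length, checkable by a polynomial-time verifier. -/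
def InNP (A : Lang) : Prop :=
  ∃ (g : List Bool → List Bool) (q : Polynomial ℕ),
    PolyTimeComputable g ∧
    ∀ x, A x ↔ ∃ c : List Bool,
      c.length ≤ q.eval x.length ∧ g (pairEnc x c) = [true]

/-- `B` is NP-hard. -/
def NPHard (B : Lang) : Prop := ∀ A, InNP A → Reduces A B

def encNat (k : ℕ) : List Bool := List.replicate k true ++ [false]

def encTree {n : ℕ} : PTree (Fin n) → List Bool
  | .leaf x => false :: encNat x.val
  | .node l r => true :: (encTree l ++ encTree r)

open PTree in
/-- The decision version of computing the HOP measure `d*_HOP`. -/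
noncomputable def HOPLang : Lang := fun w =>
  ∃ (n : ℕ) (t t' : PTree (Fin n)) (k : ℕ),
    w = encNat n ++ encTree t ++ encTree t' ++ encNat k ∧
    t.IsPhylo ∧ t'.IsPhylo ∧ t.labelSet = t'.labelSet ∧
    dHOPstar t t' ≤ k

end Phylo
namespace Phylo
open PTree

/-!
Both trees are caterpillars, so each leaf hangs off the spine at its own depth, and the spine
vertex at depth `m` separates the `x`'s from the `y`'s: they lie below it in `S` and above it
in `S'`.

OLA: restrictions of caterpillars are caterpillars, and in both trees the sibling of the newly
attached leaf `i` is the vertex created at step `i - 1`, except for `y₁` and `y₂` in `S'`, whose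
siblings are the leaves `x₁` and `y₁`.

Hybrid number: keeping the `x`'s with the root and cutting off every `y` is an acyclic agreement
forest with `m` components. Conversely, a component meeting both `X` and `Y` has at most two
leaves and contains the separating spine vertex in both trees; a component with two `x`'s and
one with two `y`'s would lie above each other in `S` and in `S'` in opposite order, a cycle.
So either the `y`'s, or the `x`'s, lie in distinct non-root components, or all non-root
components are single leaves and the root component has at most `m` leaves.
-/

open List

theorem filter_le_range' (i a : ℕ) :
    ∀ n, (range' a n).filter (fun e => decide (e ≤ i)) = range' a (min n (i + 1 - a))
  | 0 => by simp
  | n + 1 => by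
    rw [range'_1_concat, filter_append, filter_le_range' i a n]
    by_cases h : a + n ≤ i
    · rw [min_eq_left (by omega), min_eq_left (by omega), range'_1_concat]
      simp [h]
    · rw [min_eq_right (by omega), min_eq_right (by omega)]
      simp [h]

theorem cons_range' {a b n k : ℕ} (hb : b = a + 1) (hk : k = n + 1) :
    a :: range' b n = range' a k := by
  subst hb hk
  rfl

theorem range'_append_range' {a b k n l : ℕ} (hb : b = a + k) (hl : l = k + n) :
    range' a k ++ range' b n = range' a l := by
  subst hb hl
  exact range'_append_1

theorem range'_eq_append_cons {a n e : ℕ} (h₁ : a ≤ e) (h₂ : e < a + n) :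
    range' a n = range' a (e - a) ++ e :: range' (e + 1) (a + n - e - 1) := by
  rw [cons_range' rfl rfl, range'_append_range' (by omega) rfl]
  congr 1
  omega

theorem range'_eq_cons_append_singleton {a e : ℕ} (h : a < e) :
    range' a (e + 1 - a) = a :: (range' (a + 1) (e - a - 1) ++ [e]) := by
  obtain ⟨k, rfl⟩ := Nat.exists_eq_add_of_lt h
  rw [(by omega : a + k + 1 + 1 - a = k + 1 + 1), (by omega : a + k + 1 - a - 1 = k),
    range'_1_concat, range'_succ, cons_append]
  rfl

theorem range'_one_two_mul (m : ℕ) : range' 1 (2 * m) = range' 1 m ++ range' (m + 1) m := by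
  rw [range'_append_range' (Nat.add_comm m 1) (Nat.two_mul m)]

theorem map_range_add (a n : ℕ) : (List.range n).map (· + a) = range' a n := by
  rw [range'_eq_map_range]
  exact map_congr_left fun _ _ => Nat.add_comm _ _

theorem card_le_length_filter {α : Type} [DecidableEq α] {L : Finset α} {l : List α}
    (h : ∀ e ∈ L, e ∈ l) : L.card ≤ (l.filter fun e => decide (e ∈ L)).length :=
  (Finset.card_le_card fun e he => by simpa [he] using h e he).trans (toFinset_card_le _)

theorem hamming_map_range {α : Type} [DecidableEq α] (f g : ℕ → α) (n : ℕ) :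
    hamming ((List.range n).map f) ((List.range n).map g) =
      ((Finset.range n).filter fun j => f j ≠ g j).card := by
  rw [hamming, zip_map', countP_map, countP_eq_length_filter, Finset.card_def, Finset.filter_val,
    Finset.range_val, Multiset.range, Multiset.filter_coe, Multiset.coe_card]
  rfl

section Trees

variable {W : Type}

theorem Iso.refl : ∀ t : PTree W, Iso t t
  | .leaf x => .leaf x
  | .node l r => .node (Iso.refl l) (Iso.refl r)

theorem PTree.map_id (t : PTree W) : t.map (fun x => x) = t := by
  induction t with
  | leaf x => rfl
  | node l r ihl ihr => rw [PTree.map, ihl, ihr]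

theorem restrict_eq_none {p : W → Bool} :
    ∀ {t : PTree W}, (∀ x ∈ t.leaves, p x = false) → restrict p t = none
  | .leaf x, h => by simp [restrict, h x (by simp [PTree.leaves])]
  | .node l r, h => by
    have hl := restrict_eq_none (t := l) fun x hx => h x (by simp [PTree.leaves, hx])
    have hr := restrict_eq_none (t := r) fun x hx => h x (by simp [PTree.leaves, hx])
    simp [restrict, hl, hr]

variable [DecidableEq W]

theorem restrictF_singleton :
    ∀ {t : PTree W}, t.leaves.Nodup → ∀ {y : W}, y ∈ t.leaves → restrictF t {y} = some (.leaf y)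
  | .leaf x, _, y, hy => by
    obtain rfl : y = x := by simpa [PTree.leaves] using hy
    simp [restrictF, restrict]
  | .node l r, hnd, y, hy => by
    rw [PTree.leaves, nodup_append] at hnd
    have hout : ∀ {s : PTree W}, y ∉ s.leaves → restrictF s {y} = none := fun hs =>
      restrict_eq_none fun x hx => by simpa using fun h : x = y => hs (h ▸ hx)
    rcases mem_append.1 hy with hl | hr
    · have hr : y ∉ r.leaves := fun h => hnd.2.2 y hl y h rfl
      have := restrictF_singleton hnd.1 hl
      simp only [restrictF] at this hout ⊢
      rw [restrict, this, hout hr]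
    · have hl : y ∉ l.leaves := fun h => hnd.2.2 y h y hr rfl
      have := restrictF_singleton hnd.2.1 hr
      simp only [restrictF] at this hout ⊢
      rw [restrict, this, hout hl]

theorem leafPos_isSome {x : W} : ∀ {t : PTree W}, x ∈ t.leaves → (leafPos x t).isSome
  | .leaf y, h => by simp_all [PTree.leaves, leafPos]
  | .node l r, h => by
    rw [leafPos]
    rcases hl : leafPos x l with _ | p
    · have : x ∈ r.leaves := by
        rcases mem_append.1 h with h | h
        · simpa [hl] using leafPos_isSome h
        · exact h
      simpa using leafPos_isSome this
    · rfl

theorem leafPos_eq_some_pos {x : W} {t : PTree W} (hx : x ∈ t.leaves) :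
    leafPos x t = some (pos t x) := by
  obtain ⟨p, hp⟩ := Option.isSome_iff_exists.1 (leafPos_isSome hx)
  simp [pos, hp]

theorem eq_of_leafPos_prefix {x y : W} :
    ∀ {t : PTree W} {p q : List Bool}, leafPos x t = some p → leafPos y t = some q → p <+: q →
      x = y
  | .leaf z, p, q, hp, hq, _ => by
    simp only [leafPos, Option.ite_none_right_eq_some] at hp hq
    exact hp.1.symm.trans hq.1
  | .node l r, p, q, hp, hq, hpq => by
    simp only [leafPos] at hp hq
    rcases hxl : leafPos x l with _ | p' <;> rcases hyl : leafPos y l with _ | q' <;>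
      simp only [hxl, hyl, Option.some.injEq, Option.map_eq_some_iff] at hp hq
    · obtain ⟨p', hxr, rfl⟩ := hp
      obtain ⟨q', hyr, rfl⟩ := hq
      exact eq_of_leafPos_prefix hxr hyr (cons_prefix_cons.1 hpq).2
    · obtain ⟨p', -, rfl⟩ := hp
      subst hq
      simp at hpq
    · obtain ⟨q', -, rfl⟩ := hq
      subst hp
      simp at hpq
    · subst hp hq
      exact eq_of_leafPos_prefix hxl hyl (cons_prefix_cons.1 hpq).2

theorem eq_of_pos_prefix {t : PTree W} {x y : W} (hx : x ∈ t.leaves) (hy : y ∈ t.leaves)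
    (h : pos t x <+: pos t y) : x = y :=
  eq_of_leafPos_prefix (leafPos_eq_some_pos hx) (leafPos_eq_some_pos hy) h

end Trees

section Caterpillars

variable {W : Type}

/-- The caterpillar `(z, zs₀, zs₁, …)`; unlike `caterpillar` it may consist of a single leaf. -/
def caterpillarFrom (z : W) (zs : List W) : PTree W :=
  zs.foldl (fun t x => .node t (.leaf x)) (.leaf z)

def caterpillarFrom? : List W → Option (PTree W)
  | [] => none
  | z :: zs => some (caterpillarFrom z zs)

variable {z w : W} {zs ws : List W}

theorem caterpillar_eq_caterpillarFrom (z₁ z₂ : W) (zs : List W) :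
    caterpillar z₁ z₂ zs = caterpillarFrom z₁ (z₂ :: zs) := rfl

@[simp] theorem caterpillarFrom_nil : caterpillarFrom z [] = .leaf z := rfl

theorem caterpillarFrom_append_singleton :
    caterpillarFrom z (zs ++ [w]) = .node (caterpillarFrom z zs) (.leaf w) := by
  simp [caterpillarFrom, foldl_append]

theorem leaves_caterpillarFrom : (caterpillarFrom z zs).leaves = z :: zs := by
  induction zs using reverseRecOn with
  | nil => rfl
  | append_singleton zs w ih => simp [caterpillarFrom_append_singleton, PTree.leaves, ih]

theorem minLeaf_caterpillarFrom {z : ℕ} {zs : List ℕ} (h : ∀ a ∈ zs, z ≤ a) :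
    minLeaf (caterpillarFrom z zs) = z := by
  induction zs using reverseRecOn with
  | nil => rfl
  | append_singleton zs w ih =>
    rw [caterpillarFrom_append_singleton, minLeaf, ih fun a ha => h a (by simp [ha]), minLeaf]
    exact min_eq_left (h w (by simp))

theorem restrict_caterpillarFrom (p : W → Bool) :
    restrict p (caterpillarFrom z zs) = caterpillarFrom? ((z :: zs).filter p) := by
  induction zs using reverseRecOn with
  | nil => by_cases h : p z <;> simp [restrict, caterpillarFrom?, h]
  | append_singleton zs w ih =>
    rw [caterpillarFrom_append_singleton, ← cons_append, filter_append, restrict, ih]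
    by_cases hw : p w <;> rcases (z :: zs).filter p with _ | ⟨a, as⟩ <;>
      simp [restrict, caterpillarFrom?, hw, caterpillarFrom_append_singleton]

theorem caterpillarFrom?_eq_node_node_leaf {l : List W} (hl : 3 ≤ l.length) :
    ∃ a b, caterpillarFrom? l =
      some (.node (.node a b) (.leaf (l.getLast (ne_nil_of_length_pos (by omega))))) := by
  obtain ⟨l', w, rfl⟩ := (eq_nil_or_concat' l).resolve_left (by rintro rfl; simp at hl)
  obtain ⟨l'', v, rfl⟩ := (eq_nil_or_concat' l').resolve_left (by rintro rfl; simp at hl)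
  obtain ⟨z, zs, rfl⟩ := exists_cons_of_length_pos (by simp at hl; omega : 0 < l''.length)
  refine ⟨caterpillarFrom z zs, .leaf v, ?_⟩
  simp only [cons_append, caterpillarFrom?, caterpillarFrom_append_singleton]
  simp

theorem Iso.eq_of_node_leaf {a b c d : PTree W} {w w' : W}
    (h : Iso (.node (.node a b) (.leaf w)) (.node (.node c d) (.leaf w'))) : w = w' := by
  rcases h with _ | ⟨-, h⟩ | ⟨h, -⟩
  · cases h; rfl
  · cases h

theorem getLast_eq_of_iso {l l' : List W} (hl : 3 ≤ l.length) (hl' : 3 ≤ l'.length)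
    {u u' : PTree W} (hu : caterpillarFrom? l = some u) (hu' : caterpillarFrom? l' = some u')
    (h : Iso u u') :
    l.getLast (ne_nil_of_length_pos (by omega)) = l'.getLast (ne_nil_of_length_pos (by omega)) := by
  obtain ⟨a, b, hab⟩ := caterpillarFrom?_eq_node_node_leaf hl
  obtain ⟨c, d, hcd⟩ := caterpillarFrom?_eq_node_node_leaf hl'
  rw [hab, Option.some.injEq] at hu
  rw [hcd, Option.some.injEq] at hu'
  subst hu hu'
  exact h.eq_of_node_leaf

variable [DecidableEq W] {i : W}

theorem sibling_caterpillarFrom_append {s : PTree W}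
    (hs : sibling i (caterpillarFrom z zs) = some s) (hws : i ∉ ws) : sibling i (caterpillarFrom z (zs ++ ws)) = some s := by
  induction ws using reverseRecOn with
  | nil => simpa using hs
  | append_singleton ws w ih =>
    have ih := ih fun h => hws (by simp [h])
    have hne : caterpillarFrom z (zs ++ ws) ≠ .leaf i := fun h => by simp [h, sibling] at ih
    have hw : (PTree.leaf w : PTree W) ≠ .leaf i := fun h => hws (by simp_all)
    rw [← append_assoc, caterpillarFrom_append_singleton]
    simp [sibling, hne, hw, ih]

theorem sibling_caterpillarFrom (hi : i ∉ z :: zs) (hws : i ∉ ws) :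
    sibling i (caterpillarFrom z (zs ++ i :: ws)) = some (caterpillarFrom z zs) := by
  rw [← singleton_append, ← append_assoc]
  refine sibling_caterpillarFrom_append ?_ hws
  have hne : caterpillarFrom z zs ≠ .leaf i := fun h => hi (by
    have := congrArg PTree.leaves h
    simp only [leaves_caterpillarFrom, PTree.leaves, cons.injEq] at this
    simp [this.1])
  simp [caterpillarFrom_append_singleton, sibling, hne]

theorem sibling_caterpillarFrom_head (hws : i ∉ ws) :
    sibling i (caterpillarFrom i (w :: ws)) = some (.leaf w) := by
  rw [← singleton_append]
  refine sibling_caterpillarFrom_append ?_ hws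
  simp [caterpillarFrom, sibling]

theorem leafPos_caterpillarFrom_head :
    leafPos z (caterpillarFrom z zs) = some (replicate zs.length false) := by
  induction zs using reverseRecOn with
  | nil => simp [leafPos]
  | append_singleton zs w ih =>
    simp [caterpillarFrom_append_singleton, leafPos, ih, replicate_succ]

theorem leafPos_caterpillarFrom_of_not_mem {x : W} (h : x ∉ z :: zs) :
    leafPos x (caterpillarFrom z zs) = none := by
  induction zs using reverseRecOn with
  | nil => simp [leafPos, Ne.symm (by simpa using h : x ≠ z)]
  | append_singleton zs w ih =>
    have hw : w ≠ x := fun hw => h (by simp [hw])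
    simp [caterpillarFrom_append_singleton, leafPos, ih (fun h' => h (by simp_all)), hw]

theorem leafPos_caterpillarFrom {x : W} (h : x ∉ z :: zs) (hws : x ∉ ws) :
    leafPos x (caterpillarFrom z (zs ++ x :: ws)) = some (replicate ws.length false ++ [true]) := by
  induction ws using reverseRecOn with
  | nil =>
    rw [caterpillarFrom_append_singleton]
    simp [leafPos, leafPos_caterpillarFrom_of_not_mem h]
  | append_singleton ws w ih =>
    rw [← cons_append, ← append_assoc, caterpillarFrom_append_singleton]
    simp [leafPos, ih (fun h' => hws (by simp [h'])), replicate_succ]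

theorem pos_caterpillarFrom_head : pos (caterpillarFrom z zs) z = replicate zs.length false := by
  rw [pos, leafPos_caterpillarFrom_head, Option.getD_some]

theorem pos_caterpillarFrom {x : W} (h : x ∉ z :: zs) (hws : x ∉ ws) :
    pos (caterpillarFrom z (zs ++ x :: ws)) x = replicate ws.length false ++ [true] := by
  rw [pos, leafPos_caterpillarFrom h hws, Option.getD_some]

end Caterpillars

section Forests

variable {W : Type} [DecidableEq W]

theorem lcp_nil_right (p : List Bool) : lcp p [] = [] := by cases p <;> rfl

theorem lcp_self : ∀ p : List Bool, lcp p p = p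
  | [] => rfl
  | a :: p => by simp [lcp, lcp_self p]

theorem prefix_lcp_iff {r : List Bool} :
    ∀ {p q : List Bool}, r <+: lcp p q ↔ r <+: p ∧ r <+: q
  | [], q => by simp [lcp, prefix_nil]; rintro rfl; exact nil_prefix
  | a :: p, [] => by simp [lcp_nil_right, prefix_nil]; rintro rfl; exact nil_prefix
  | a :: p, b :: q => by
    rcases r with _ | ⟨c, r⟩
    · simp
    by_cases hab : a = b
    · subst hab
      simp [lcp, cons_prefix_cons, prefix_lcp_iff]
      tauto
    · simp only [lcp, hab, if_false, prefix_nil, reduceCtorEq, false_iff, cons_prefix_cons]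
      rintro ⟨⟨rfl, -⟩, rfl, -⟩
      exact hab rfl

theorem lcp_prefix_left (p q : List Bool) : lcp p q <+: p :=
  (prefix_lcp_iff.1 (prefix_refl _)).1

theorem prefix_rootOf_iff {t : PTree W} {L : Finset W} (hL : L.Nonempty) {r : List Bool} :
    r <+: rootOf t L ↔ ∀ e ∈ L, r <+: pos t e := by
  unfold rootOf
  simp only [← Finset.mem_toList]
  rcases h : L.toList with _ | ⟨a, rest⟩
  · exact absurd (Finset.toList_eq_nil.1 h) hL.ne_empty
  clear h
  simp only [mem_cons, forall_eq_or_imp]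
  induction rest with
  | nil => simp
  | cons b rest ih => simp only [foldr_cons, prefix_lcp_iff, ih, mem_cons, forall_eq_or_imp]; tauto

theorem rootOf_singleton (t : PTree W) (y : W) : rootOf t {y} = pos t y := by
  simp [rootOf]

theorem lcp_mem_compVerts {t : PTree W} {L : Finset W} {a b : W} (ha : a ∈ L) (hb : b ∈ L) :
    lcp (pos t a) (pos t b) ∈ compVerts t L :=
  ⟨a, ha, b, hb, prefix_refl _, Or.inl (lcp_prefix_left _ _)⟩

theorem prefix_of_mem_compVerts_singleton {t : PTree W} {y : W} {p : List Bool}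
    (h : p ∈ compVerts t {y}) : pos t y <+: p ∧ p <+: pos t y := by
  obtain ⟨a, ha, b, hb, h1, h2⟩ := h
  rw [Finset.mem_singleton] at ha hb
  subst ha hb
  rw [lcp_self] at h1
  exact ⟨h1, h2.elim id id⟩

section Singletons

variable {T : PTree W} {Lρ : Finset W} {y y' : W}

theorem compVerts_singleton_disjoint (hy : y ∈ T.leaves) (hy' : y' ∈ T.leaves) (hne : y ≠ y') :
    ∀ p ∈ compVerts T {y}, p ∉ compVerts T {y'} := fun _ hp hp' =>
  hne <| eq_of_pos_prefix hy hy'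
    ((prefix_of_mem_compVerts_singleton hp).1.trans (prefix_of_mem_compVerts_singleton hp').2)

theorem rhoVerts_disjoint_compVerts_singleton (hLρ : ∀ a ∈ Lρ, a ∈ T.leaves)
    (hy : y ∈ T.leaves) (hyρ : y ∉ Lρ) : ∀ p ∈ rhoVerts T Lρ, p ∉ compVerts T {y} := by
  rintro p ⟨a, ha, hpa⟩ hp
  obtain rfl := eq_of_pos_prefix hy (hLρ a ha) ((prefix_of_mem_compVerts_singleton hp).1.trans hpa)
  exact hyρ ha

end Singletons

theorem not_afEdge_singleton {t t' : PTree W} {C : Finset (Finset W)} {y y' : W}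
    (hy : y ∈ t.leaves ∧ y ∈ t'.leaves) (hy' : y' ∈ t.leaves ∧ y' ∈ t'.leaves) :
    ¬ afEdge t t' C {y} {y'} := by
  rintro ⟨-, -, hne, hroot⟩
  simp only [rootOf_singleton] at hroot
  refine hne (congrArg _ ?_)
  rcases hroot with ⟨h, -⟩ | ⟨h, -⟩
  · exact eq_of_pos_prefix hy.1 hy'.1 h
  · exact eq_of_pos_prefix hy.2 hy'.2 h

theorem isAcyclicAF_singletons {t t' : PTree W} (ht : t.leaves.Nodup) (ht' : t'.leaves.Nodup)
    (hlab : t.labelSet = t'.labelSet) {Lρ : Finset W} (hLρ : Lρ ⊆ t.labelSet)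
    (hres : restrictF t Lρ = restrictF t' Lρ) :
    IsAcyclicAF t t' Lρ ((t.labelSet \ Lρ).image fun y => {y}) := by
  have hleaves {y : W} (hy : y ∈ t.labelSet) : y ∈ t.leaves ∧ y ∈ t'.leaves :=
    ⟨by simpa [PTree.labelSet] using hy, by rw [hlab] at hy; simpa [PTree.labelSet] using hy⟩
  have hρ (T : PTree W) (hT : ∀ {y}, y ∈ t.labelSet → y ∈ T.leaves) : ∀ a ∈ Lρ, a ∈ T.leaves :=
    fun a ha => hT (hLρ ha)
  refine ⟨⟨?_, ?_, ?_, ?_, ?_, ?_, ?_, ?_, ?_⟩, ?_⟩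
  all_goals try simp only [Finset.forall_mem_image, Finset.forall_mem_insert, Finset.mem_sdiff]
  · exact fun y _ => Finset.singleton_nonempty y
  · exact fun y _ y' _ hne => Finset.disjoint_singleton.2 fun h => hne (h ▸ rfl)
  · exact fun y hy => Finset.disjoint_singleton_right.2 hy.2
  · intro x hx
    by_cases hxρ : x ∈ Lρ
    · exact Or.inl hxρ
    · exact Or.inr ⟨{x}, Finset.mem_image_of_mem _ (Finset.mem_sdiff.2 ⟨hx, hxρ⟩),
        Finset.mem_singleton_self x⟩
  · exact Finset.coe_subset.2 hLρ
  · exact fun y hy => by simpa using hy.1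
  · refine ⟨fun u hu => ⟨u, hres ▸ hu, Iso.refl u⟩, fun y hy u hu => ?_⟩
    rw [restrictF_singleton ht (hleaves hy.1).1, Option.some.injEq] at hu
    exact ⟨_, restrictF_singleton ht' (hleaves hy.1).2, hu ▸ Iso.refl _⟩
  · intro y hy y' hy' hne
    have hne : y ≠ y' := fun h => hne (h ▸ rfl)
    exact ⟨compVerts_singleton_disjoint (hleaves hy.1).1 (hleaves hy'.1).1 hne,
      compVerts_singleton_disjoint (hleaves hy.1).2 (hleaves hy'.1).2 hne⟩
  · exact fun y hy =>
      ⟨rhoVerts_disjoint_compVerts_singleton (hρ t fun h => (hleaves h).1) (hleaves hy.1).1 hy.2,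
        rhoVerts_disjoint_compVerts_singleton (hρ t' fun h => (hleaves h).2) (hleaves hy.1).2 hy.2⟩
  · intro L h
    obtain ⟨L', hedge, -⟩ := Relation.TransGen.head'_iff.1 h
    obtain ⟨y, hy, rfl⟩ := Finset.mem_image.1 hedge.1
    obtain ⟨y', hy', rfl⟩ := Finset.mem_image.1 hedge.2.1
    exact not_afEdge_singleton (hleaves (Finset.mem_sdiff.1 hy).1)
      (hleaves (Finset.mem_sdiff.1 hy').1) hedge

theorem hyb_eq_card {t t' : PTree W} {Lρ : Finset W} {C : Finset (Finset W)}
    (h : IsAcyclicAF t t' Lρ C) (hmin : ∀ Lρ' C', IsAcyclicAF t t' Lρ' C' → C.card ≤ C'.card) :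
    hyb t t' = C.card :=
  le_antisymm (Nat.sInf_le ⟨Lρ, C, h, rfl⟩)
    (le_csInf ⟨_, Lρ, C, h, rfl⟩ fun _ ⟨_, _, h', hk⟩ => hk ▸ hmin _ _ h')

/-- `p` is the position of the spine vertex at depth `s` of a caterpillar, or of the leaf hanging
off it. -/
def IsSpinePos (p : List Bool) (s : ℕ) : Prop :=
  ∃ u, (u = [] ∨ u = [true]) ∧ p = replicate s false ++ u

theorem isSpinePos_replicate (s : ℕ) : IsSpinePos (replicate s false) s :=
  ⟨[], Or.inl rfl, (append_nil _).symm⟩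

theorem IsSpinePos.replicate_prefix {p : List Bool} {s c : ℕ} (h : IsSpinePos p s) (hc : c ≤ s) :
    replicate c false <+: p := by
  obtain ⟨u, -, rfl⟩ := h
  refine ⟨replicate (s - c) false ++ u, ?_⟩
  rw [← append_assoc, ← replicate_add, Nat.add_sub_cancel' hc]

theorem replicate_prefix_replicate {c s : ℕ} (hc : c ≤ s) :
    replicate c false <+: replicate s false :=
  (isSpinePos_replicate s).replicate_prefix hc

theorem lcp_eq_replicate {p q : List Bool} {s t : ℕ} (hp : IsSpinePos p s) (hq : IsSpinePos q t)
    (hst : s ≠ t) : lcp p q = replicate (min s t) false := by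
  obtain ⟨u, hu, rfl⟩ := hp
  obtain ⟨v, hv, rfl⟩ := hq
  induction s generalizing t with
  | zero =>
    obtain ⟨t, rfl⟩ := Nat.exists_eq_succ_of_ne_zero (Ne.symm hst)
    rcases hu with rfl | rfl <;> simp [replicate_succ, lcp]
  | succ s ih =>
    cases t with
    | zero => rcases hv with rfl | rfl <;> simp [replicate_succ, lcp]
    | succ t => simp [replicate_succ, lcp, ih (t := t) (by omega), Nat.succ_min_succ]

/-- The spine vertex at depth `m` of `t` separates the leaves of `A` (below it) from those of `B`
(above it). -/
def SpineSplit (t : PTree W) (A B : Finset W) (m : ℕ) : Prop :=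
  ∃ d : W → ℕ, Set.InjOn d ↑(A ∪ B) ∧ (∀ e ∈ A ∪ B, IsSpinePos (pos t e) (d e)) ∧
    (∀ a ∈ A, m ≤ d a) ∧ ∀ b ∈ B, d b < m

namespace SpineSplit

variable {t : PTree W} {A B L L' Lρ : Finset W} {m : ℕ}

theorem disjoint (h : SpineSplit t A B m) : Disjoint A B := by
  obtain ⟨d, -, -, hA, hB⟩ := h
  exact Finset.disjoint_left.2 fun e ha hb => (hA e ha).not_gt (hB e hb)

theorem replicate_mem_compVerts (h : SpineSplit t A B m) {a b : W} (ha : a ∈ L) (haA : a ∈ A)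
    (hb : b ∈ L) (hbB : b ∈ B) : replicate m false ∈ compVerts t L := by
  obtain ⟨d, -, hpos, hA, hB⟩ := h
  have hda := hA a haA
  have hdb := hB b hbB
  have hpa := hpos a (Finset.mem_union_left _ haA)
  refine ⟨a, ha, b, hb, ?_, Or.inl (hpa.replicate_prefix hda)⟩
  rw [lcp_eq_replicate hpa (hpos b (Finset.mem_union_right _ hbB)) (by omega)]
  exact replicate_prefix_replicate (by omega)

theorem replicate_mem_rhoVerts (h : SpineSplit t A B m) {a : W} (ha : a ∈ Lρ) (haA : a ∈ A) :
    replicate m false ∈ rhoVerts t Lρ := by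
  obtain ⟨d, -, hpos, hA, -⟩ := h
  exact ⟨a, ha, (hpos a (Finset.mem_union_left _ haA)).replicate_prefix (hA a haA)⟩

theorem lcp_mem_rhoVerts (h : SpineSplit t A B m) {a b b' : W} (ha : a ∈ Lρ) (haA : a ∈ A)
    (hb : b ∈ B) (hb' : b' ∈ B) (hne : b ≠ b') : lcp (pos t b) (pos t b') ∈ rhoVerts t Lρ := by
  obtain ⟨d, hinj, hpos, hA, hB⟩ := h
  have hd : d b ≠ d b' := fun hd => hne (hinj (by simp [hb]) (by simp [hb']) hd)
  refine ⟨a, ha, ?_⟩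
  rw [lcp_eq_replicate (hpos b (by simp [hb])) (hpos b' (by simp [hb'])) hd]
  exact (hpos a (by simp [haA])).replicate_prefix (by have := hA a haA; have := hB b hb; omega)

theorem rootOf_lt (h : SpineSplit t A B m) (hL : L.Nonempty) (hLA : L ⊆ A) {b b' : W}
    (hb : b ∈ L') (hbB : b ∈ B) (hb' : b' ∈ L') (hb'B : b' ∈ B) (hne : b ≠ b') :
    rootOf t L' <+: rootOf t L ∧ rootOf t L' ≠ rootOf t L := by
  obtain ⟨d, hinj, hpos, hA, hB⟩ := h
  have hd : d b ≠ d b' := fun hd => hne (hinj (by simp [hbB]) (by simp [hb'B]) hd)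
  have hmin : min (d b) (d b') < m := by have := hB b hbB; omega
  have h₁ : rootOf t L' <+: replicate (min (d b) (d b')) false := by
    have hroot := (prefix_rootOf_iff ⟨b, hb⟩).1 (prefix_refl (rootOf t L'))
    rw [← lcp_eq_replicate (hpos b (by simp [hbB])) (hpos b' (by simp [hb'B])) hd]
    exact prefix_lcp_iff.2 ⟨hroot b hb, hroot b' hb'⟩
  have h₂ : replicate m false <+: rootOf t L :=
    (prefix_rootOf_iff hL).2 fun e he =>
      (hpos e (by simp [hLA he])).replicate_prefix (hA e (hLA he))
  refine ⟨h₁.trans ((replicate_prefix_replicate hmin.le).trans h₂), fun heq => ?_⟩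
  have := h₁.length_le
  have := h₂.length_le
  simp only [heq, length_replicate] at *
  omega

end SpineSplit

theorem card_le_card_of_cover {A Lρ : Finset W} {C : Finset (Finset W)}
    (hcover : ∀ a ∈ A, a ∈ Lρ ∨ ∃ L ∈ C, a ∈ L) (hρ : Disjoint Lρ A)
    (hone : ∀ L ∈ C, (L ∩ A).card ≤ 1) : A.card ≤ C.card :=
  Finset.card_le_card_of_forall_subsingleton (· ∈ ·)
    (fun a ha => (hcover a ha).resolve_left (Finset.disjoint_right.1 hρ ha))
    (fun L hL a ha a' ha' => Finset.card_le_one.1 (hone L hL) a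
      (Finset.mem_inter.2 ⟨ha.2, ha.1⟩) a' (Finset.mem_inter.2 ⟨ha'.2, ha'.1⟩))

theorem subset_of_one_lt_card_inter {A B L : Finset W} (hL : L ⊆ A ∪ B)
    (h2 : 1 < (L ∩ A).card) (hmix : ∀ b ∈ L ∩ B, L.card ≤ 2) : L ⊆ A := by
  intro e he
  by_contra heA
  have heB : e ∈ L ∩ B := Finset.mem_inter.2 ⟨he, (Finset.mem_union.1 (hL he)).resolve_left heA⟩
  have := Finset.card_lt_card <| (Finset.ssubset_iff_of_subset Finset.inter_subset_left).2
    ⟨e, he, fun h => heA (Finset.mem_inter.1 h).2⟩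
  have := hmix e heB
  omega

theorem inter_nonempty_of_card_inter_le_one {A B L : Finset W} (hL : L ⊆ A ∪ B)
    (h2 : 1 < L.card) (hB : (L ∩ B).card ≤ 1) : (L ∩ A).Nonempty := by
  rw [← Finset.card_pos]
  have hsplit : L ⊆ L ∩ A ∪ L ∩ B := by
    rw [← Finset.inter_union_distrib_left]; exact Finset.subset_inter subset_rfl hL
  have := (Finset.card_le_card hsplit).trans (Finset.card_union_le _ _)
  omega

section LowerBound

variable {t t' : PTree W} {X Y Lρ : Finset W} {C : Finset (Finset W)} {m : ℕ}

/-- A component inside `X` and a component inside `Y`, each with two leaves, form a cycle: in `t`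
the second root is above the first, in `t'` the first is above the second. -/
theorem false_of_pair_subset_of_pair_subset (ht : SpineSplit t X Y m)
    (ht' : SpineSplit t' Y X m) (hacyc : ∀ L, ¬ Relation.TransGen (afEdge t t' C) L L)
    {L L' : Finset W} (hL : L ∈ C) (hL' : L' ∈ C) (hLX : L ⊆ X) (hL2 : 1 < L.card)
    (hL'Y : L' ⊆ Y) (hL'2 : 1 < L'.card) : False := by
  obtain ⟨x, hx, x', hx', hxx⟩ := Finset.one_lt_card.1 hL2
  obtain ⟨y, hy, y', hy', hyy⟩ := Finset.one_lt_card.1 hL'2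
  have hne : L ≠ L' := fun h =>
    Finset.disjoint_left.1 ht.disjoint (hLX hx) (hL'Y (h ▸ hx))
  have e₁ : afEdge t t' C L' L := ⟨hL', hL, hne.symm,
    Or.inl (ht.rootOf_lt ⟨x, hx⟩ hLX hy (hL'Y hy) hy' (hL'Y hy') hyy)⟩
  have e₂ : afEdge t t' C L L' := ⟨hL, hL', hne,
    Or.inr (ht'.rootOf_lt ⟨y, hy⟩ hL'Y hx (hLX hx) hx' (hLX hx') hxx)⟩
  exact hacyc L (.head e₂ (.single e₁))

theorem card_le_card_of_pair {T : PTree W} {A B : Finset W} (hT : SpineSplit T A B m)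
    (hdisj : ∀ L ∈ C, ∀ p ∈ rhoVerts T Lρ, p ∉ compVerts T L) {L₀ : Finset W} (hL₀ : L₀ ∈ C)
    (hB : 1 < (L₀ ∩ B).card) (hcover : ∀ a ∈ A, a ∈ Lρ ∨ ∃ L ∈ C, a ∈ L)
    (hone : ∀ L ∈ C, (L ∩ A).card ≤ 1) : A.card ≤ C.card := by
  refine card_le_card_of_cover hcover (Finset.disjoint_left.2 fun a ha haA => ?_) hone
  obtain ⟨b, hb, b', hb', hne⟩ := Finset.one_lt_card.1 hB
  rw [Finset.mem_inter] at hb hb'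
  exact hdisj L₀ hL₀ _ (hT.lcp_mem_rhoVerts ha haA hb.2 hb'.2 hne) (lcp_mem_compVerts hb.1 hb'.1)

theorem min_card_le_card_of_no_pair (ht : SpineSplit t X Y m) (hlab : t.labelSet = X ∪ Y)
    (hAF : IsAgreementForest t t' Lρ C) (hmix : ∀ x ∈ Lρ ∩ X, ∀ y ∈ Lρ ∩ Y, Lρ.card ≤ 2)
    (hX : ∀ L ∈ C, (L ∩ X).card ≤ 1) (hY : ∀ L ∈ C, (L ∩ Y).card ≤ 1) (h2 : 2 ≤ X.card) :
    min X.card Y.card ≤ C.card := by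
  obtain ⟨-, -, -, hcover, hρsub, hCsub, -, -, hdisj⟩ := hAF
  rw [hlab] at hcover hρsub hCsub
  by_cases hρY : Disjoint Lρ Y
  · exact (min_le_right _ _).trans
      (card_le_card_of_cover (fun y hy => hcover y (Finset.mem_union_right _ hy)) hρY hY)
  by_cases hρX : Disjoint Lρ X
  · exact (min_le_left _ _).trans
      (card_le_card_of_cover (fun x hx => hcover x (Finset.mem_union_left _ hx)) hρX hX)
  obtain ⟨x, hxρ, hxX⟩ := Finset.not_disjoint_iff.1 hρX
  obtain ⟨y, hyρ, hyY⟩ := Finset.not_disjoint_iff.1 hρY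
  -- a component of `C` with two leaves would hold a leaf of `X` and one of `Y`,
  -- and so meet the root component at depth `m` in `t`
  have hsingle : ∀ L ∈ C, (L ∩ ((X ∪ Y) \ Lρ)).card ≤ 1 := by
    intro L hL
    refine (Finset.card_le_card Finset.inter_subset_left).trans (not_lt.1 fun hL2 => ?_)
    have hLsub : L ⊆ X ∪ Y := Finset.coe_subset.1 (hCsub L hL)
    obtain ⟨x', hx'⟩ := inter_nonempty_of_card_inter_le_one hLsub hL2 (hY L hL)
    obtain ⟨y', hy'⟩ := inter_nonempty_of_card_inter_le_one (Finset.union_comm X Y ▸ hLsub) hL2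
      (hX L hL)
    rw [Finset.mem_inter] at hx' hy'
    exact (hdisj L hL).1 _ (ht.replicate_mem_rhoVerts hxρ hxX)
      (ht.replicate_mem_compVerts hx'.1 hx'.2 hy'.1 hy'.2)
  have hcount := card_le_card_of_cover (fun a ha => hcover a (Finset.sdiff_subset ha))
    Finset.disjoint_sdiff hsingle
  rw [Finset.card_sdiff_of_subset (Finset.coe_subset.1 hρsub),
    Finset.card_union_of_disjoint ht.disjoint] at hcount
  have := hmix x (Finset.mem_inter.2 ⟨hxρ, hxX⟩) y (Finset.mem_inter.2 ⟨hyρ, hyY⟩)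
  omega

theorem min_card_le_card_of_spineSplit (ht : SpineSplit t X Y m) (ht' : SpineSplit t' Y X m)
    (hlab : t.labelSet = X ∪ Y) (hAF : IsAcyclicAF t t' Lρ C)
    (hmix : ∀ L ∈ insert Lρ C, ∀ x ∈ L ∩ X, ∀ y ∈ L ∩ Y, L.card ≤ 2) (h2 : 2 ≤ X.card) :
    min X.card Y.card ≤ C.card := by
  obtain ⟨hAF, hacyc⟩ := hAF
  obtain ⟨-, -, -, hcover, -, hCsub, -, -, hdisj⟩ := id hAF
  rw [hlab] at hcover hCsub
  have hsub (L : Finset W) (hL : L ∈ C) : L ⊆ X ∪ Y := Finset.coe_subset.1 (hCsub L hL)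
  have hpureX (L : Finset W) (hL : L ∈ C) (h : 1 < (L ∩ X).card) : L ⊆ X :=
    subset_of_one_lt_card_inter (hsub L hL) h fun y hy => by
      obtain ⟨x, hx⟩ := Finset.card_pos.1 (by omega : 0 < (L ∩ X).card)
      exact hmix L (Finset.mem_insert_of_mem hL) x hx y hy
  have hpureY (L : Finset W) (hL : L ∈ C) (h : 1 < (L ∩ Y).card) : L ⊆ Y :=
    subset_of_one_lt_card_inter (Finset.union_comm X Y ▸ hsub L hL) h fun x hx => by
      obtain ⟨y, hy⟩ := Finset.card_pos.1 (by omega : 0 < (L ∩ Y).card)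
      exact hmix L (Finset.mem_insert_of_mem hL) x hx y hy
  have hcycle (L : Finset W) (hL : L ∈ C) (L' : Finset W) (hL' : L' ∈ C)
      (hX : 1 < (L ∩ X).card) (hY : 1 < (L' ∩ Y).card) : False :=
    false_of_pair_subset_of_pair_subset ht ht' hacyc hL hL' (hpureX L hL hX)
      (hX.trans_le (Finset.card_le_card Finset.inter_subset_left)) (hpureY L' hL' hY)
      (hY.trans_le (Finset.card_le_card Finset.inter_subset_left))
  by_cases hXpair : ∃ L ∈ C, 1 < (L ∩ X).card
  · obtain ⟨L₀, hL₀, hX⟩ := hXpair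
    refine (min_le_right _ _).trans (card_le_card_of_pair ht' (fun L hL => (hdisj L hL).2) hL₀ hX
      (fun y hy => hcover y (Finset.mem_union_right _ hy)) fun L hL => ?_)
    exact not_lt.1 (hcycle L₀ hL₀ L hL hX)
  by_cases hYpair : ∃ L ∈ C, 1 < (L ∩ Y).card
  · obtain ⟨L₀, hL₀, hY⟩ := hYpair
    refine (min_le_left _ _).trans (card_le_card_of_pair ht (fun L hL => (hdisj L hL).1) hL₀ hY
      (fun x hx => hcover x (Finset.mem_union_left _ hx)) fun L hL => ?_)
    exact not_lt.1 fun hX => hcycle L hL L₀ hL₀ hX hY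
  simp only [not_exists, not_and, not_lt] at hXpair hYpair
  exact min_card_le_card_of_no_pair ht hlab hAF (hmix Lρ (Finset.mem_insert_self _ _))
    hXpair hYpair h2

end LowerBound

end Forests

theorem olaLabel_caterpillarFrom_range' {z a n : ℕ} (hz : z ≤ a) (hn : 0 < n) :
    olaLabel (caterpillarFrom z (range' a n)) = -((a + n - 1 : ℕ) : ℤ) := by
  obtain ⟨n, rfl⟩ := Nat.exists_eq_add_of_lt hn
  rw [Nat.zero_add, range'_1_concat, caterpillarFrom_append_singleton, olaLabel,
    minLeaf_caterpillarFrom fun b hb => by rw [mem_range'_1] at hb; omega, minLeaf,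
    max_eq_right (by omega)]
  congr 2

theorem olaCoord_eq_olaLabel {t : PTree ℕ} {i z : ℕ} {zs ws : List ℕ}
    (h : restrict (fun x => decide (x ≤ i)) t = some (caterpillarFrom z (zs ++ i :: ws)))
    (hi : i ∉ z :: zs) (hws : i ∉ ws) : olaCoord t i = olaLabel (caterpillarFrom z zs) := by
  rw [olaCoord, h]
  simp only [sibling_caterpillarFrom hi hws]

section TwoCaterpillars

variable {m i : ℕ}

/-- `S = (x₁, …, x_m, y₁, …, y_m)`, with `x_i = i` and `y_j = m + j`. -/
def catXY (m : ℕ) : PTree ℕ := caterpillarFrom 1 (range' 2 (2 * m - 1))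

/-- `S' = (y₁, …, y_m, x₁, …, x_m)`. -/
def catYX (m : ℕ) : PTree ℕ := caterpillarFrom (m + 1) (range' (m + 2) (m - 1) ++ range' 1 m)

theorem caterpillar_eq_catXY (hm : 1 ≤ m) :
    caterpillar 1 2 ((List.range (2 * m - 2)).map (· + 3)) = catXY m := by
  rw [caterpillar_eq_caterpillarFrom, map_range_add, cons_range' rfl (by omega : 2 * m - 1 = _),
    catXY]

theorem caterpillar_eq_catYX (hm : 2 ≤ m) :
    caterpillar (m + 1) (m + 2)
      (((List.range (m - 2)).map (· + (m + 3))) ++ ((List.range m).map (· + 1))) = catYX m := by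
  rw [caterpillar_eq_caterpillarFrom, map_range_add, map_range_add, ← cons_append,
    cons_range' rfl (by omega : m - 1 = _), catYX]

theorem leaves_catXY (hm : 1 ≤ m) : (catXY m).leaves = range' 1 (2 * m) := by
  rw [catXY, leaves_caterpillarFrom, cons_range' rfl (by omega : 2 * m = 2 * m - 1 + 1)]

theorem leaves_catYX (hm : 1 ≤ m) : (catYX m).leaves = range' (m + 1) m ++ range' 1 m := by
  rw [catYX, leaves_caterpillarFrom, ← cons_append, cons_range' rfl (by omega : m = m - 1 + 1)]

theorem labelSet_catXY (hm : 1 ≤ m) : (catXY m).labelSet = Finset.Icc 1 (2 * m) := by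
  ext e
  simp [PTree.labelSet, leaves_catXY hm]
  omega

theorem labelSet_catYX (hm : 1 ≤ m) : (catYX m).labelSet = Finset.Icc 1 (2 * m) := by
  ext e
  simp [PTree.labelSet, leaves_catYX hm]
  omega

theorem nodup_leaves_catXY (hm : 1 ≤ m) : (catXY m).leaves.Nodup := by
  rw [leaves_catXY hm]
  exact nodup_range'

theorem nodup_leaves_catYX (hm : 1 ≤ m) : (catYX m).leaves.Nodup := by
  rw [leaves_catYX hm, nodup_append]
  exact ⟨nodup_range', nodup_range', fun a ha b hb => by simp at ha hb; omega⟩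

theorem restrict_catXY (hm : 1 ≤ m) (p : ℕ → Bool) :
    restrict p (catXY m) = caterpillarFrom? ((range' 1 (2 * m)).filter p) := by
  rw [← leaves_catXY hm, catXY, restrict_caterpillarFrom, leaves_caterpillarFrom]

theorem restrict_catYX (hm : 1 ≤ m) (p : ℕ → Bool) :
    restrict p (catYX m) = caterpillarFrom? ((range' (m + 1) m ++ range' 1 m).filter p) := by
  rw [← leaves_catYX hm, catYX, restrict_caterpillarFrom, leaves_caterpillarFrom]

theorem restrictF_catXY_Icc_eq (hm : 1 ≤ m) :
    restrictF (catXY m) (Finset.Icc 1 m) = restrictF (catYX m) (Finset.Icc 1 m) := by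
  rw [restrictF, restrictF, restrict_catXY hm, restrict_catYX hm, range'_one_two_mul,
    filter_append, filter_append, filter_eq_self.2, filter_eq_nil_iff.2, append_nil, nil_append]
  all_goals
    intro a ha
    simp only [mem_range'_1, Finset.mem_Icc, decide_eq_true_eq] at ha ⊢
    omega

theorem isSpinePos_pos_catXY {e : ℕ} (h₁ : 1 ≤ e) (h₂ : e ≤ 2 * m) :
    IsSpinePos (pos (catXY m) e) (2 * m - e) := by
  rcases h₁.eq_or_lt with rfl | h₁
  · rw [catXY, pos_caterpillarFrom_head, length_range']
    exact isSpinePos_replicate _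
  · rw [catXY, range'_eq_append_cons (by omega : 2 ≤ e) (by omega : e < 2 + (2 * m - 1)),
      pos_caterpillarFrom (by simp; omega) (by simp), length_range']
    exact ⟨[true], Or.inr rfl, by congr 2; omega⟩

theorem isSpinePos_pos_catYX {e : ℕ} (h₁ : 1 ≤ e) (h₂ : e ≤ 2 * m) :
    IsSpinePos (pos (catYX m) e) (if e ≤ m then m - e else 3 * m - e) := by
  rcases le_or_gt e m with he | he
  · rw [if_pos he, catYX, range'_eq_append_cons (by omega : 1 ≤ e) (by omega : e < 1 + m),
      ← append_assoc, pos_caterpillarFrom (by simp; omega) (by simp), length_range']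
    exact ⟨[true], Or.inr rfl, by congr 2; omega⟩
  rw [if_neg (by omega)]
  rcases Nat.lt_or_ge (m + 1) e with he | he
  swap
  · obtain rfl : e = m + 1 := by omega
    rw [catYX, pos_caterpillarFrom_head, length_append, length_range', length_range']
    exact ⟨[], Or.inl rfl, by rw [append_nil]; congr 1; omega⟩
  · rw [catYX, range'_eq_append_cons (by omega : m + 2 ≤ e) (by omega : e < m + 2 + (m - 1)),
      append_assoc, cons_append, pos_caterpillarFrom (by simp; omega) (by simp; omega),
      length_append, length_range', length_range']
    exact ⟨[true], Or.inr rfl, by congr 2; omega⟩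

theorem spineSplit_catXY :
    SpineSplit (catXY m) (Finset.Icc 1 m) (Finset.Icc (m + 1) (2 * m)) m := by
  refine ⟨fun e => 2 * m - e, fun a ha b hb h => ?_, fun e he => ?_, fun a ha => ?_,
    fun b hb => ?_⟩ <;> simp at * <;> try omega
  exact isSpinePos_pos_catXY (by omega) (by omega)

theorem spineSplit_catYX :
    SpineSplit (catYX m) (Finset.Icc (m + 1) (2 * m)) (Finset.Icc 1 m) m := by
  refine ⟨fun e => if e ≤ m then m - e else 3 * m - e, fun a ha b hb h => ?_, fun e he => ?_,
    fun a ha => ?_, fun b hb => ?_⟩ <;> simp at * <;> try (split_ifs at * <;> omega)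
  exact isSpinePos_pos_catYX (by omega) (by omega)

/-- With three or more leaves, the top leaf of the restriction of a component would be its
largest `y` in `S` but its largest `x` in `S'`. -/
theorem card_le_two_of_iso {L : Finset ℕ} (hL : L ⊆ Finset.Icc 1 (2 * m)) {x y : ℕ}
    (hx : x ∈ L ∩ Finset.Icc 1 m) (hy : y ∈ L ∩ Finset.Icc (m + 1) (2 * m))
    (hiso : ∀ u, restrictF (catXY m) L = some u →
      ∃ u', restrictF (catYX m) L = some u' ∧ Iso u u') : L.card ≤ 2 := by
  simp only [Finset.mem_inter, Finset.mem_Icc] at hx hy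
  by_contra! h3
  set lX := (range' 1 m).filter fun e => decide (e ∈ L)
  set lY := (range' (m + 1) m).filter fun e => decide (e ∈ L)
  have hlX : lX ≠ [] := ne_nil_of_mem (a := x) (by simp [lX, hx.1]; omega)
  have hlY : lY ≠ [] := ne_nil_of_mem (a := y) (by simp [lY, hy.1]; omega)
  have hlen : L.card ≤ (lX ++ lY).length := by
    rw [← filter_append, ← range'_one_two_mul]
    exact card_le_length_filter fun e he => by
      have := Finset.mem_Icc.1 (hL he)
      simp only [mem_range'_1]
      omega
  obtain ⟨u', hu', hiso⟩ := hiso _ (by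
    rw [restrictF, restrict_catXY (by omega), range'_one_two_mul, filter_append]
    exact (caterpillarFrom?_eq_node_node_leaf (l := lX ++ lY) (by omega)).choose_spec.choose_spec)
  have htop := getLast_eq_of_iso (l := lX ++ lY) (l' := lY ++ lX) (by omega)
    (by rw [length_append] at hlen ⊢; omega)
    (caterpillarFrom?_eq_node_node_leaf (by omega)).choose_spec.choose_spec
    (by rw [← hu', restrictF, restrict_catYX (by omega), filter_append]) hiso
  rw [getLast_append_of_right_ne_nil _ _ hlY, getLast_append_of_right_ne_nil _ _ hlX] at htop
  have hYtop := (mem_filter.1 (getLast_mem hlY)).1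
  have hXtop := (mem_filter.1 (getLast_mem hlX)).1
  rw [htop, mem_range'_1] at hYtop
  rw [mem_range'_1] at hXtop
  omega

theorem hyb_catXY_catYX (hm : 2 ≤ m) : hyb (catXY m) (catYX m) = m := by
  have hm1 : 1 ≤ m := by omega
  have hAF := isAcyclicAF_singletons (nodup_leaves_catXY hm1) (nodup_leaves_catYX hm1)
    ((labelSet_catXY hm1).trans (labelSet_catYX hm1).symm)
    (by rw [labelSet_catXY hm1]; exact Finset.Icc_subset_Icc_right (by omega))
    (restrictF_catXY_Icc_eq hm1)
  have hcard :
      (((catXY m).labelSet \ Finset.Icc 1 m).image fun y => ({y} : Finset ℕ)).card = m := by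
    rw [Finset.card_image_of_injective _ Finset.singleton_injective, labelSet_catXY hm1,
      Finset.card_sdiff_of_subset (Finset.Icc_subset_Icc_right (by omega)), Nat.card_Icc,
      Nat.card_Icc]
    omega
  refine (hyb_eq_card hAF fun Lρ C h => ?_).trans hcard
  rw [hcard]
  obtain ⟨⟨-, -, -, -, hρsub, hCsub, hiso, -, -⟩, -⟩ := id h
  have hsub : ∀ L ∈ insert Lρ C, L ⊆ Finset.Icc 1 (2 * m) := by
    rw [Finset.forall_mem_insert, ← labelSet_catXY hm1]
    exact ⟨Finset.coe_subset.1 hρsub, fun L hL => Finset.coe_subset.1 (hCsub L hL)⟩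
  have hXY : Finset.Icc 1 (2 * m) = Finset.Icc 1 m ∪ Finset.Icc (m + 1) (2 * m) := by
    ext e
    simp only [Finset.mem_Icc, Finset.mem_union]
    omega
  have := min_card_le_card_of_spineSplit spineSplit_catXY spineSplit_catYX
    (by rw [labelSet_catXY hm1, hXY]) h
    (fun L hL x hx y hy => card_le_two_of_iso (hsub L hL) hx hy (hiso L hL))
    (by rw [Nat.card_Icc]; omega)
  rw [Nat.card_Icc, Nat.card_Icc] at this
  omega

theorem olaCoord_catXY (h₃ : 3 ≤ i) (hi : i ≤ 2 * m) :
    olaCoord (catXY m) i = -((i - 1 : ℕ) : ℤ) := by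
  rw [olaCoord_eq_olaLabel (z := 1) (zs := range' 2 (i - 2)) (ws := []) ?_ (by simp; omega)
    (by simp), olaLabel_caterpillarFrom_range' (z := 1) (a := 2) (n := i - 2) (by omega) (by omega)]
  · congr 2
    omega
  rw [restrict_catXY (by omega), filter_le_range', min_eq_right (by omega),
    range'_eq_cons_append_singleton (by omega : 1 < i)]
  rfl

theorem olaCoord_catYX_of_le (h₃ : 3 ≤ i) (hi : i ≤ m) :
    olaCoord (catYX m) i = -((i - 1 : ℕ) : ℤ) := by
  rw [olaCoord_eq_olaLabel (z := 1) (zs := range' 2 (i - 2)) (ws := []) ?_ (by simp; omega)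
    (by simp), olaLabel_caterpillarFrom_range' (z := 1) (a := 2) (n := i - 2) (by omega) (by omega)]
  · congr 2
    omega
  rw [restrict_catYX (by omega), filter_append, filter_le_range', filter_le_range',
    min_eq_right (by omega : i + 1 - (m + 1) ≤ m), min_eq_right (by omega : i + 1 - 1 ≤ m),
    (by omega : i + 1 - (m + 1) = 0), range'_zero, nil_append,
    range'_eq_cons_append_singleton (by omega : 1 < i)]
  rfl

theorem olaCoord_catYX_succ (hm : 2 ≤ m) : olaCoord (catYX m) (m + 1) = 1 := by
  have h : restrict (fun x => decide (x ≤ m + 1)) (catYX m) =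
      some (caterpillarFrom (m + 1) (range' 1 m)) := by
    rw [restrict_catYX (by omega), filter_append, filter_le_range', filter_le_range',
      min_eq_right (by omega : m + 1 + 1 - (m + 1) ≤ m), min_eq_left (by omega : m ≤ m + 1 + 1 - 1),
      (by omega : m + 1 + 1 - (m + 1) = 1)]
    rfl
  rw [olaCoord, h, ← cons_range' (b := 2) (n := m - 1) (k := m) rfl (by omega)]
  simp only [sibling_caterpillarFrom_head (by simp; omega : m + 1 ∉ range' 2 (m - 1))]
  rfl

theorem olaCoord_catYX_of_gt (h : m + 2 ≤ i) (hi : i ≤ 2 * m) :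
    olaCoord (catYX m) i = olaLabel (caterpillarFrom (m + 1) (range' (m + 2) (i - m - 2))) := by
  refine olaCoord_eq_olaLabel (z := m + 1) (ws := range' 1 m) ?_ (by simp; omega)
    (by simp; omega)
  rw [restrict_catYX (by omega), filter_append, filter_le_range', filter_le_range',
    min_eq_right (by omega : i + 1 - (m + 1) ≤ m), min_eq_left (by omega : m ≤ i + 1 - 1),
    range'_eq_cons_append_singleton (by omega : m + 1 < i)]
  rw [(by omega : i - (m + 1) - 1 = i - m - 2), cons_append, append_assoc, singleton_append]
  rfl

theorem olaCoord_catXY_ne_iff (hm : 2 ≤ m) (h₃ : 3 ≤ i) (hi : i ≤ 2 * m) :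
    olaCoord (catXY m) i ≠ olaCoord (catYX m) i ↔ i = m + 1 ∨ i = m + 2 := by
  rw [olaCoord_catXY h₃ hi]
  rcases le_or_gt i m with him | him
  · rw [olaCoord_catYX_of_le h₃ him]
    omega
  rcases (Nat.succ_le_of_lt him).eq_or_lt with rfl | him
  · rw [olaCoord_catYX_succ hm]
    omega
  rw [olaCoord_catYX_of_gt him hi]
  rcases (Nat.succ_le_of_lt him).eq_or_lt with rfl | him
  · rw [(by omega : m + 1 + 1 - m - 2 = 0)]
    simp [olaLabel]
    omega
  · rw [olaLabel_caterpillarFrom_range' (by omega) (by omega)]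
    omega

theorem dOLA_catXY_catYX (hm : 2 ≤ m) : dOLA (fun x => x) (catXY m) (catYX m) = 2 := by
  rw [dOLA, PTree.map_id, PTree.map_id, olaVec, olaVec, leaves_catXY (by omega),
    leaves_catYX (by omega), length_append, length_range', length_range', length_range', ← two_mul,
    hamming_map_range]
  refine (congrArg Finset.card (a₂ := {m, m + 1}) ?_).trans (Finset.card_pair (by omega))
  ext j
  simp only [Finset.mem_filter, Finset.mem_range, Finset.mem_insert, Finset.mem_singleton]
  rcases Nat.lt_or_ge j 2 with hj | hj
  · interval_cases j <;> simp <;> omega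
  · rw [if_neg (by omega), if_neg (by omega), if_neg (by omega), if_neg (by omega)]
    constructor
    · rintro ⟨hj2, hne⟩
      have := (olaCoord_catXY_ne_iff hm (by omega) (by omega)).1 hne
      omega
    · intro h
      exact ⟨by omega, (olaCoord_catXY_ne_iff hm (by omega) (by omega)).2 (by omega)⟩

theorem isOrd_catXY (hm : 1 ≤ m) : IsOrd (catXY m) (fun x => x) := by
  rw [IsOrd, labelSet_catXY hm, leaves_catXY hm, length_range', Finset.coe_Icc]
  exact Set.bijOn_id _

end TwoCaterpillars

/-- For the caterpillars
`S = (x₁, …, x_m, y₁, …, y_m)` and `S' = (y₁, …, y_m, x₁, …, x_m)`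
(with `x_i = i` and `y_j = m + j`), under the identity-type ordering
`σ (x₁) < ⋯ < σ (x_m) < σ (y₁) < ⋯ < σ (y_m)` the OLA distance is `2`,
while the hybrid number is `m`; hence `d*_OLA (S, S') ≤ 2 < m = h (S, S')`. -/
theorem ola_lt_hybrid_caterpillars (m : ℕ) (hm : 3 ≤ m) :
    dOLA (fun x => x)
        (caterpillar 1 2 ((List.range (2 * m - 2)).map (· + 3)))
        (caterpillar (m + 1) (m + 2)
          (((List.range (m - 2)).map (· + (m + 3))) ++
            ((List.range m).map (· + 1)))) = 2 ∧
    hyb (caterpillar 1 2 ((List.range (2 * m - 2)).map (· + 3)))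
        (caterpillar (m + 1) (m + 2)
          (((List.range (m - 2)).map (· + (m + 3))) ++
            ((List.range m).map (· + 1)))) = m ∧
    dOLAstar (caterpillar 1 2 ((List.range (2 * m - 2)).map (· + 3)))
        (caterpillar (m + 1) (m + 2)
          (((List.range (m - 2)).map (· + (m + 3))) ++
            ((List.range m).map (· + 1)))) ≤ 2 ∧
    2 < m := by
  rw [caterpillar_eq_catXY (by omega), caterpillar_eq_catYX (by omega)]
  have hOLA := dOLA_catXY_catYX (by omega : 2 ≤ m)
  exact ⟨hOLA, hyb_catXY_catYX (by omega), Nat.sInf_le ⟨_, isOrd_catXY (by omega), hOLA⟩,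
    by omega⟩

end Phylo
end

section
/- Let T and T' be two rooted binary phylogenetic X-trees on the 5-leaf set X = {x₁,…,x₅}, where T is the caterpillar (x₁, x₃, x₄, x₅, x₂) and T' is the caterpillar (x₂, x₃, x₄, x₅, x₁). Then the only common cherry-picking sequences of T and T' are (x₃, x₄, x₅, x₁, x₂) and (x₃, x₄, x₅, x₂, x₁), and both have weight 3; yet for the non-CPS ordering σ with σ(x₃) < σ(x₄) < σ(x₅) < σ(x₁) < σ(x₂), one has d^σ_Θ(T,T') = 2 for each Θ ∈ {OLA, P2V, HOP}. Hence d*_Θ(T,T') < d^{CPS}_Θ(T,T') = 3. -/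
namespace Phylo
open PTree

noncomputable def dCPSOLA {W : Type} [DecidableEq W] (t t' : PTree W) : ℕ :=
  sInf {k | ∃ S, IsCommonCPS t t' S ∧ dOLA (inducedOrd S) t t' = k}

noncomputable def dCPSHOP {W : Type} [DecidableEq W] (t t' : PTree W) : ℕ :=
  sInf {k | ∃ S, IsCommonCPS t t' S ∧ dHOP (inducedOrd S) t t' = k}

noncomputable def dCPSP2V {W : Type} [DecidableEq W] (t t' : PTree W) : ℕ :=
  sInf {k | ∃ S, IsCommonCPS t t' S ∧ dP2V (inducedOrd S) t t' = k}


/-!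
In `T` the only cherry is `{x₁, x₃}` and in `T'` it is `{x₂, x₃}`, so a common cherry-picking
sequence must pick `x₃` first; the same holds for `x₄` and then `x₅`, after which only `{x₁, x₂}`
remains. In each of the three forced picks the partners (`x₁` versus `x₂`) differ, giving weight
`3`. A CPS ranks its first element highest, whereas `σ` ranks `x₃, x₄, x₅` lowest; the concrete
distances are finite computations checked by the kernel.
-/

section CherryPicking

variable {W : Type} [DecidableEq W]

theorem isCPS_iff (t : PTree W) (S : List W) :
    IsCPS t S ↔ ∀ i (hi : i < S.length - 1),
      ∃ u ∈ restAfter t S i, (cherryPartner (S[i]'(by omega)) u).isSome := by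
  unfold IsCPS
  refine forall_congr' fun i => ⟨fun h hi => ?_, fun h hi => ?_⟩
  · obtain ⟨u, hu, hy⟩ := h (by omega)
    obtain ⟨y, hy⟩ := hy (by omega)
    exact ⟨u, hu, by rw [List.get_eq_getElem] at hy; simp [hy]⟩
  · obtain ⟨u, hu, hy⟩ := h (by omega)
    exact ⟨u, hu, fun _ => Option.isSome_iff_exists.mp hy⟩

instance (t : PTree W) (S : List W) : Decidable (IsCPS t S) :=
  decidable_of_iff' _ (isCPS_iff t S)

theorem isCommonCPS_iff_mem_permutations' {t t' : PTree W} (ht : t.leaves.Nodup)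
    (S : List W) :
    IsCommonCPS t t' S ↔ S ∈ t.leaves.permutations' ∧ IsCPS t S ∧ IsCPS t' S := by
  rw [List.mem_permutations', IsCommonCPS]
  constructor
  · rintro ⟨hS, hmem, hcps⟩
    exact ⟨(List.perm_ext_iff_of_nodup hS ht).2 hmem, hcps⟩
  · rintro ⟨hperm, hcps⟩
    exact ⟨hperm.nodup_iff.2 ht, fun _ => hperm.mem_iff, hcps⟩

variable {t : PTree W} {σ : W → ℕ}

theorem isOrd_of_perm_range'
    (hσ : (t.leaves.map σ).Perm (List.range' 1 t.leaves.length)) : IsOrd t σ := by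
  have hmem : ∀ y, y ∈ t.leaves.map σ ↔ y ∈ Set.Icc 1 t.leaves.length := fun y => by
    rw [hσ.mem_iff, List.mem_range'_1, Set.mem_Icc]
    omega
  refine ⟨fun x hx => ?_, fun x hx y hy => ?_, fun y hy => ?_⟩
  · exact (hmem _).1 (List.mem_map_of_mem (List.mem_toFinset.1 hx))
  · exact List.inj_on_of_nodup_map (hσ.nodup_iff.2 List.nodup_range')
      (List.mem_toFinset.1 hx) (List.mem_toFinset.1 hy)
  · obtain ⟨x, hx, rfl⟩ := List.mem_map.1 ((hmem y).2 hy)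
    exact ⟨x, List.mem_toFinset.2 hx, rfl⟩

theorem dOLAstar_le_dOLA (hσ : IsOrd t σ) (t' : PTree W) : dOLAstar t t' ≤ dOLA σ t t' :=
  Nat.sInf_le ⟨σ, hσ, rfl⟩

theorem dP2Vstar_le_dP2V (hσ : IsOrd t σ) (t' : PTree W) : dP2Vstar t t' ≤ dP2V σ t t' :=
  Nat.sInf_le ⟨σ, hσ, rfl⟩

theorem dHOPstar_le_dHOP (hσ : IsOrd t σ) (t' : PTree W) : dHOPstar t t' ≤ dHOP σ t t' :=
  Nat.sInf_le ⟨σ, hσ, rfl⟩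

end CherryPicking

theorem sInf_setOf_exists_eq_of_forall {α : Type} {P : α → Prop} {f : α → ℕ} {k : ℕ}
    (hP : ∃ a, P a) (hf : ∀ a, P a → f a = k) : sInf {m | ∃ a, P a ∧ f a = m} = k := by
  obtain ⟨a, ha⟩ := hP
  have hset : {m | ∃ a, P a ∧ f a = m} = {k} := by
    ext m
    exact ⟨fun ⟨b, hb, hm⟩ => hm ▸ hf b hb, fun hm => ⟨a, ha, (hf a ha).trans hm.symm⟩⟩
  rw [hset, csInf_singleton]

local notation "T₁" => caterpillar 1 3 [4, 5, 2]
local notation "T₂" => caterpillar 2 3 [4, 5, 1]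

theorem isCommonCPS_caterpillars (S : List ℕ) :
    IsCommonCPS T₁ T₂ S ↔ S = [3, 4, 5, 1, 2] ∨ S = [3, 4, 5, 2, 1] := by
  rw [isCommonCPS_iff_mem_permutations' (by decide)]
  refine ⟨fun ⟨hS, h₁, h₂⟩ => ?_, by rintro (rfl | rfl) <;> decide⟩
  have key : ∀ S ∈ (T₁).leaves.permutations', IsCPS T₁ S → IsCPS T₂ S →
      S = [3, 4, 5, 1, 2] ∨ S = [3, 4, 5, 2, 1] := by
    set_option maxRecDepth 40000 in decide
  exact key S hS h₁ h₂

theorem forall_isCommonCPS_caterpillars {p : List ℕ → Prop} :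
    (∀ S, IsCommonCPS T₁ T₂ S → p S) ↔ p [3, 4, 5, 1, 2] ∧ p [3, 4, 5, 2, 1] := by
  simp only [isCommonCPS_caterpillars, or_imp, forall_and, forall_eq]

/-- For the caterpillars `T = (x₁, x₃, x₄, x₅, x₂)` and
`T' = (x₂, x₃, x₄, x₅, x₁)` (with `x_i = i`), the only common cherry-picking
sequences are `(x₃, x₄, x₅, x₁, x₂)` and `(x₃, x₄, x₅, x₂, x₁)`, both of
weight `3`; but under the (non-CPS) ordering
`σ (x₃) < σ (x₄) < σ (x₅) < σ (x₁) < σ (x₂)` one has `d^σ_Θ (T, T') = 2` for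
each `Θ ∈ {OLA, P2V, HOP}`.  Hence `d*_Θ (T, T') < d^CPS_Θ (T, T') = 3`. -/
theorem cps_ordering_not_optimal :
    ∀ T T' : PTree ℕ, T = caterpillar 1 3 [4, 5, 2] →
      T' = caterpillar 2 3 [4, 5, 1] →
    ∀ σ : ℕ → ℕ,
      (σ = fun x => if x = 3 then 1 else if x = 4 then 2 else
        if x = 5 then 3 else if x = 1 then 4 else 5) →
      (∀ L : List ℕ, IsCommonCPS T T' L ↔
        (L = [3, 4, 5, 1, 2] ∨ L = [3, 4, 5, 2, 1])) ∧
      wtCPS T T' [3, 4, 5, 1, 2] = 3 ∧ wtCPS T T' [3, 4, 5, 2, 1] = 3 ∧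
      (∀ S : List ℕ, IsCommonCPS T T' S → inducedOrd S ≠ σ) ∧
      dOLA σ T T' = 2 ∧ dP2V σ T T' = 2 ∧ dHOP σ T T' = 2 ∧
      dCPSOLA T T' = 3 ∧ dCPSP2V T T' = 3 ∧ dCPSHOP T T' = 3 ∧
      dOLAstar T T' < dCPSOLA T T' ∧ dP2Vstar T T' < dCPSP2V T T' ∧
      dHOPstar T T' < dCPSHOP T T' := by
  rintro T T' rfl rfl σ hσ
  have hcps : ∃ S, IsCommonCPS T₁ T₂ S := ⟨_, (isCommonCPS_caterpillars _).2 (.inl rfl)⟩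
  have hord : IsOrd T₁ σ := isOrd_of_perm_range' (by subst hσ; decide)
  have hOLA : dOLA σ T₁ T₂ = 2 := by subst hσ; decide
  have hP2V : dP2V σ T₁ T₂ = 2 := by subst hσ; decide
  -- `lcsLen` is defined by well-founded recursion, which only the kernel unfolds.
  have hHOP : dHOP σ T₁ T₂ = 2 := by subst hσ; decide +kernel
  have hCPSOLA : dCPSOLA T₁ T₂ = 3 := sInf_setOf_exists_eq_of_forall hcps
    (forall_isCommonCPS_caterpillars.2 ⟨by decide, by decide⟩)
  have hCPSP2V : dCPSP2V T₁ T₂ = 3 := sInf_setOf_exists_eq_of_forall hcps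
    (forall_isCommonCPS_caterpillars.2 ⟨by decide, by decide⟩)
  have hCPSHOP : dCPSHOP T₁ T₂ = 3 := sInf_setOf_exists_eq_of_forall hcps
    (forall_isCommonCPS_caterpillars.2 ⟨by decide +kernel, by decide +kernel⟩)
  refine ⟨isCommonCPS_caterpillars, by decide, by decide,
    forall_isCommonCPS_caterpillars.2 ⟨fun h => absurd (congrFun h 1) (by subst hσ; decide),
      fun h => absurd (congrFun h 1) (by subst hσ; decide)⟩,
    hOLA, hP2V, hHOP, hCPSOLA, hCPSP2V, hCPSHOP,
    (dOLAstar_le_dOLA hord _).trans_lt (by rw [hOLA, hCPSOLA]; norm_num),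
    (dP2Vstar_le_dP2V hord _).trans_lt (by rw [hP2V, hCPSP2V]; norm_num),
    (dHOPstar_le_dHOP hord _).trans_lt (by rw [hHOP, hCPSHOP]; norm_num)⟩

end Phylo
end
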